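/- arXiv:math/9712268 — 8 statements merged into one kernel-verified Lean document; each statement's English description precedes it below -/
import Mathlib

section
/- Let a, b, c be orientation-preserving homeomorphisms of ℝ (strictly increasing continuous bijections) such that c commutes with both a and b, and c(x) > x for all x ∈ ℝ. Then for all x ∈ ℝ, c⁻¹(c⁻¹(x)) < (a ∘ b ∘ a⁻¹ ∘ b⁻¹)(x) < c(c(x)). -/
/-!
Every orbit of `c` is unbounded in both directions, so each `t` has a level `n : ℤ` relative to
a base point `x`, namely `c^n x ≤ t < c^(n+1) x`. A homeomorphism commuting with `c` shifts all
levels by the same amount; so if `p x` has level `n` and `q x` has level `m`, both `p (q x)` and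
`q (p x)` lie in `[c^(n+m) x, c^(n+m+2) x)`, and therefore differ by less than `c²`. Applied to
`p = a`, `q = b` at `y = a⁻¹ b⁻¹ x`, where `b (a y) = x`, this bounds the commutator.
-/

open Filter

theorem tendsto_iterate_atTop_of_forall_lt_apply {α : Type*} [ConditionallyCompleteLinearOrder α]
    [TopologicalSpace α] [OrderTopology α] {f : α → α} (hf : Continuous f)
    (hlt : ∀ x, x < f x) (x : α) : Tendsto (fun n => f^[n] x) atTop atTop := by
  have hmono : Monotone fun n => f^[n] x := monotone_nat_of_le_succ fun n => by
    rw [Function.iterate_succ_apply']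
    exact (hlt _).le
  refine (tendsto_atTop_of_monotone hmono).resolve_right ?_
  rintro ⟨l, hl⟩
  exact (hlt l).ne' (isFixedPt_of_tendsto_iterate hl hf.continuousAt)

namespace Equiv.Perm

theorem apply_zpow_apply_of_commute {α : Type*} {c p : Perm α} (hpc : Commute p c) (k : ℤ)
    (x : α) : p ((c ^ k) x) = (c ^ k) (p x) :=
  DFunLike.congr_fun (hpc.zpow_right k).eq x

variable {α : Type*} [LinearOrder α] {c p q : Perm α}

theorem strictMono_inv (hc : StrictMono c) : StrictMono ⇑c⁻¹ := fun x y hxy =>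
  hc.lt_iff_lt.mp (by simpa using hxy)

theorem strictMono_zpow (hc : StrictMono c) (k : ℤ) : StrictMono ⇑(c ^ k) := by
  obtain ⟨n, rfl | rfl⟩ := k.eq_nat_or_neg
  · simpa [← iterate_eq_pow] using hc.iterate n
  · simpa using strictMono_inv (c := c ^ n) (hc.iterate n)

theorem exists_zpow_apply_le_and_lt
    (hc : StrictMono c) (hlt : ∀ x, x < c x) (hunbdd : ∀ x t, ∃ n : ℕ, t < (c ^ n) x) (x t : α) :
    ∃ n : ℤ, (c ^ n) x ≤ t ∧ t < (c ^ (n + 1)) x := by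
  have hmono : StrictMono fun k : ℤ => (c ^ k) x := strictMono_int_of_lt_succ fun k => by
    rw [add_comm, zpow_one_add, mul_apply]
    exact hlt _
  obtain ⟨M, hM⟩ := hunbdd x t
  obtain ⟨m, hm⟩ := hunbdd t x
  have hbdd : ∀ k : ℤ, (c ^ k) x ≤ t → k ≤ M := fun k hk =>
    hmono.le_iff_le.mp (hk.trans (by simpa using hM.le))
  have hinh : (c ^ (-(m : ℤ))) x ≤ t := by
    simpa using (strictMono_zpow hc (-m)).monotone hm.le
  obtain ⟨n, hn, hmax⟩ := Int.exists_greatest_of_bdd ⟨M, hbdd⟩ ⟨_, hinh⟩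
  exact ⟨n, hn, lt_of_not_ge fun h => by simpa using hmax _ h⟩

theorem apply_apply_lt_sq_apply_apply (hc : StrictMono c) (hlt : ∀ x, x < c x)
    (hunbdd : ∀ x t, ∃ n : ℕ, t < (c ^ n) x) (hp : StrictMono p) (hq : StrictMono q)
    (hpc : Commute p c) (hqc : Commute q c) (x : α) : q (p x) < c (c (p (q x))) := by
  obtain ⟨n, hpn, hpn'⟩ := exists_zpow_apply_le_and_lt hc hlt hunbdd x (p x)
  obtain ⟨m, hqm, hqm'⟩ := exists_zpow_apply_le_and_lt hc hlt hunbdd x (q x)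
  calc q (p x) < q ((c ^ (n + 1)) x) := hq hpn'
    _ = (c ^ (n + 1)) (q x) := apply_zpow_apply_of_commute hqc _ _
    _ < (c ^ (n + 1)) ((c ^ (m + 1)) x) := strictMono_zpow hc _ hqm'
    _ = c (c ((c ^ m) ((c ^ n) x))) := by
      simp only [← mul_apply, ← zpow_add, ← zpow_one_add]
      ring_nf
    _ ≤ c (c ((c ^ m) (p x))) :=
      hc.monotone <| hc.monotone <| (strictMono_zpow hc m).monotone hpn
    _ = c (c (p ((c ^ m) x))) := by rw [apply_zpow_apply_of_commute hpc]
    _ ≤ c (c (p (q x))) := hc.monotone <| hc.monotone <| hp.monotone hqm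

end Equiv.Perm

theorem commutator_bounded_by_square_of_central_general
    (a b c : Equiv.Perm ℝ)
    (ha : StrictMono ⇑a)
    (hb : StrictMono ⇑b)
    (hc : StrictMono ⇑c) (hc' : Continuous ⇑c)
    (hac : a * c = c * a) (hbc : b * c = c * b)
    (hcx : ∀ x : ℝ, x < c x) :
    ∀ x : ℝ, c⁻¹ (c⁻¹ x) < a (b (a⁻¹ (b⁻¹ x))) ∧ a (b (a⁻¹ (b⁻¹ x))) < c (c x) := by
  have hunbdd (x t : ℝ) : ∃ n : ℕ, t < (c ^ n) x :=
    ((tendsto_iterate_atTop_of_forall_lt_apply hc' hcx x).eventually_gt_atTop t).exists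
  intro x
  set y := a⁻¹ (b⁻¹ x)
  have hy : b (a y) = x := by simp [y]
  have hba : x < c (c (a (b y))) :=
    hy ▸ Equiv.Perm.apply_apply_lt_sq_apply_apply hc hcx hunbdd ha hb hac hbc y
  have hab : a (b y) < c (c x) :=
    hy ▸ Equiv.Perm.apply_apply_lt_sq_apply_apply hc hcx hunbdd hb ha hbc hac y
  have hc_inv := Equiv.Perm.strictMono_inv hc
  refine ⟨?_, hab⟩
  calc c⁻¹ (c⁻¹ x) < c⁻¹ (c⁻¹ (c (c (a (b y))))) := hc_inv (hc_inv hba)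
    _ = a (b y) := by simp

/-- Let `a`, `b`, `c` be orientation-preserving homeomorphisms of `ℝ`
(strictly increasing continuous bijections) such that `c` commutes with both `a` and `b`,
and `c x > x` for all `x`.  Then for all `x`,
`c⁻¹ (c⁻¹ x) < (a ∘ b ∘ a⁻¹ ∘ b⁻¹) x < c (c x)`. -/
theorem commutator_bounded_by_square_of_central
    (a b c : Equiv.Perm ℝ)
    (ha : StrictMono ⇑a) (ha' : Continuous ⇑a)
    (hb : StrictMono ⇑b) (hb' : Continuous ⇑b)
    (hc : StrictMono ⇑c) (hc' : Continuous ⇑c)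
    (hac : a * c = c * a) (hbc : b * c = c * b)
    (hcx : ∀ x : ℝ, x < c x) :
    ∀ x : ℝ, c⁻¹ (c⁻¹ x) < a (b (a⁻¹ (b⁻¹ x))) ∧ a (b (a⁻¹ (b⁻¹ x))) < c (c x) :=
  commutator_bounded_by_square_of_central_general a b c ha hb hc hc' hac hbc hcx
end

section
/- Let G be a group of orientation-preserving homeomorphisms of ℝ (under composition) acting without fixed points, i.e., no element of G other than the identity fixes any point of ℝ. Then G is commutative. -/
/-!
Comparing `g 0` with `h 0` compares `g` and `h` everywhere: `h * g⁻¹` has no fixed point, so by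
the intermediate value theorem it lies entirely above or entirely below the diagonal. Hence
`g ↦ g 0` is injective on `G` and induces a linear order that is invariant under multiplication
on both sides; it is Archimedean because a bounded orbit of `g` would converge to a fixed point.
Such a group is commutative (Hölder): either there is a least element `e > 1`, and every element
is a power of `e`; or for a commutator `x⁻¹ y⁻¹ x y > 1` there is `1 < h` with `h ^ 2` below it,
and trapping `x` and `y` between consecutive powers of `h` forces the commutator below `h ^ 2`.
-/

section BiorderedGroup

variable {α : Type*} [Group α] [LinearOrder α] [MulLeftMono α]

theorem zpow_strictMono_of_one_lt {a : α} (ha : 1 < a) : StrictMono fun n : ℤ ↦ a ^ n :=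
  strictMono_int_of_lt_succ fun n ↦ by
    rw [zpow_add_one]
    exact lt_mul_of_one_lt_right' (a ^ n) ha

variable [MulRightMono α]

theorem exists_zpow_le_lt_zpow_succ (harch : ∀ g : α, 1 < g → ∀ h : α, ∃ n : ℕ, h ≤ g ^ n)
    {a : α} (ha : 1 < a) (x : α) : ∃ m : ℤ, a ^ m ≤ x ∧ x < a ^ (m + 1) := by
  obtain ⟨k, hk⟩ := harch a ha x⁻¹
  obtain ⟨n, hn⟩ := harch a ha x
  have h_bdd : ∀ m : ℤ, a ^ m ≤ x → m ≤ n := fun m hm ↦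
    (zpow_strictMono_of_one_lt ha).le_iff_le.1 (hm.trans (by rwa [zpow_natCast]))
  have h_ne : ∃ m : ℤ, a ^ m ≤ x := ⟨-k, by rwa [zpow_neg, zpow_natCast, inv_le']⟩
  obtain ⟨m, hm, hmax⟩ := Int.exists_greatest_of_bdd ⟨n, h_bdd⟩ h_ne
  exact ⟨m, hm, lt_of_not_ge fun h ↦ (hmax _ h).not_gt (lt_add_one m)⟩

theorem mem_zpowers_of_isLeast (harch : ∀ g : α, 1 < g → ∀ h : α, ∃ n : ℕ, h ≤ g ^ n)
    {e : α} (he : IsLeast {g : α | 1 < g} e) (x : α) :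
    x ∈ Subgroup.zpowers e := by
  obtain ⟨m, hle, hlt⟩ := exists_zpow_le_lt_zpow_succ harch he.1 x
  have h1 : 1 ≤ (e ^ m)⁻¹ * x := by rwa [le_inv_mul_iff_mul_le, mul_one]
  have h2 : (e ^ m)⁻¹ * x < e := by rwa [inv_mul_lt_iff_lt_mul, ← zpow_add_one]
  obtain h | h := h1.lt_or_eq
  · exact absurd (he.2 h) h2.not_ge
  · exact ⟨m, (mul_one _).symm.trans (eq_inv_mul_iff_mul_eq.1 h)⟩

theorem exists_one_lt_sq_le (hdense : ∀ g : α, 1 < g → ∃ k, 1 < k ∧ k < g) {g : α} (hg : 1 < g) :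
    ∃ h : α, 1 < h ∧ h ^ 2 ≤ g := by
  obtain ⟨k, hk1, hkg⟩ := hdense g hg
  by_cases hsq : k ^ 2 ≤ g
  · exact ⟨k, hk1, hsq⟩
  refine ⟨k⁻¹ * g, by rwa [lt_inv_mul_iff_mul_lt, mul_one], ?_⟩
  have : g * k⁻¹ < k := by rw [mul_inv_lt_iff_lt_mul, ← sq]; exact lt_of_not_ge hsq
  calc (k⁻¹ * g) ^ 2 = k⁻¹ * (g * k⁻¹) * g := by rw [sq]; group
    _ ≤ k⁻¹ * k * g := mul_le_mul_left (mul_le_mul_right this.le _) _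
    _ = g := by group

theorem commute_of_archimedean (harch : ∀ g : α, 1 < g → ∀ h : α, ∃ n : ℕ, h ≤ g ^ n)
    (x y : α) : Commute x y := by
  by_cases hdisc : ∃ e, IsLeast {g : α | 1 < g} e
  · obtain ⟨e, he⟩ := hdisc
    obtain ⟨m, rfl⟩ := mem_zpowers_of_isLeast harch he x
    obtain ⟨n, rfl⟩ := mem_zpowers_of_isLeast harch he y
    exact Commute.zpow_zpow_self e m n
  have hdense : ∀ g : α, 1 < g → ∃ k, 1 < k ∧ k < g := fun g hg ↦ by
    by_contra! h
    exact hdisc ⟨g, hg, h⟩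
  wlog hlt : y * x < x * y generalizing x y
  · obtain h | h := (not_lt.1 hlt).lt_or_eq
    · exact (this y x h).symm
    · exact h
  exfalso
  obtain ⟨h, h1, hsq⟩ := exists_one_lt_sq_le hdense (g := (y * x)⁻¹ * (x * y))
    (by rwa [lt_inv_mul_iff_mul_lt, mul_one])
  obtain ⟨m, hxm, hxm'⟩ := exists_zpow_le_lt_zpow_succ harch h1 x
  obtain ⟨n, hyn, hyn'⟩ := exists_zpow_le_lt_zpow_succ harch h1 y
  have : (y * x)⁻¹ * (x * y) < h ^ 2 := calc
    (y * x)⁻¹ * (x * y) = x⁻¹ * y⁻¹ * (x * y) := by group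
    _ < h ^ (-m) * h ^ (-n) * (h ^ (m + 1) * h ^ (n + 1)) := by
      refine mul_lt_mul_of_le_of_lt (mul_le_mul' ?_ ?_) (mul_lt_mul_of_lt_of_lt hxm' hyn')
      · rwa [zpow_neg, inv_le_inv_iff]
      · rwa [zpow_neg, inv_le_inv_iff]
    _ = h ^ 2 := by simp only [← zpow_add]; rw [← zpow_natCast]; congr 1; ring
  exact this.not_ge hsq

end BiorderedGroup

section FixedPointFree

variable {X : Type*}

theorem forall_lt_or_forall_gt_of_forall_ne [LinearOrder X] [TopologicalSpace X]
    [OrderClosedTopology X] [PreconnectedSpace X] {f : X → X} (hf : Continuous f)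
    (hne : ∀ x, f x ≠ x) : (∀ x, x < f x) ∨ ∀ x, f x < x := by
  by_contra! h
  obtain ⟨⟨a, ha⟩, b, hb⟩ := h
  obtain ⟨x, hx⟩ := intermediate_value_univ₂ hf continuous_id ha hb
  exact hne x hx

theorem exists_le_iterate_of_forall_lt [ConditionallyCompleteLinearOrder X]
    [TopologicalSpace X] [OrderTopology X] {f : X → X} (hf : Continuous f)
    (hlt : ∀ x, x < f x) (x y : X) : ∃ n : ℕ, y ≤ f^[n] x := by
  by_contra! hbdd
  have hmono : Monotone fun n ↦ f^[n] x := monotone_nat_of_le_succ fun n ↦ by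
    rw [Function.iterate_succ_apply']
    exact (hlt _).le
  have hfix := isFixedPt_of_tendsto_iterate
    (tendsto_atTop_ciSup hmono ⟨y, by rintro _ ⟨n, rfl⟩; exact (hbdd n).le⟩) hf.continuousAt
  exact (hlt _).ne' hfix

theorem Subgroup.coe_le_coe_of_apply_le_apply [LinearOrder X] [TopologicalSpace X]
    [OrderClosedTopology X] [PreconnectedSpace X] {G : Subgroup (Equiv.Perm X)}
    (hcont : ∀ g ∈ G, Continuous ⇑g) (hfree : ∀ g ∈ G, g ≠ 1 → ∀ x, g x ≠ x)
    {g h : Equiv.Perm X} (hg : g ∈ G) (hh : h ∈ G) {p : X} (hp : g p ≤ h p) : ⇑g ≤ ⇑h := by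
  intro x
  by_cases hk : h * g⁻¹ = 1
  · rw [mul_inv_eq_one.1 hk]
  have hkG := G.mul_mem hh (G.inv_mem hg)
  have happly : ∀ y, (h * g⁻¹) (g y) = h y := by simp
  rcases forall_lt_or_forall_gt_of_forall_ne (hcont _ hkG) (hfree _ hkG hk) with hup | hdown
  · simpa only [happly] using (hup (g x)).le
  · exact absurd (happly p ▸ hdown (g p)) hp.not_gt

theorem Subgroup.exists_le_pow_apply_of_lt_apply [ConditionallyCompleteLinearOrder X]
    [TopologicalSpace X] [OrderTopology X] [DenselyOrdered X] {G : Subgroup (Equiv.Perm X)}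
    (hcont : ∀ g ∈ G, Continuous ⇑g) (hfree : ∀ g ∈ G, g ≠ 1 → ∀ x, g x ≠ x)
    {g : Equiv.Perm X} (hg : g ∈ G) {p : X} (hp : p < g p) (y : X) :
    ∃ n : ℕ, y ≤ (g ^ n) p := by
  have hg1 : g ≠ 1 := fun h1 ↦ hp.ne' (by simp [h1])
  have hup : ∀ x, x < g x :=
    (forall_lt_or_forall_gt_of_forall_ne (hcont g hg) (hfree g hg hg1)).resolve_right
      fun hdown ↦ (hdown p).not_gt hp
  simpa only [← Equiv.Perm.iterate_eq_pow] using exists_le_iterate_of_forall_lt (hcont g hg) hup p y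

end FixedPointFree

/-- A group of orientation-preserving homeomorphisms of `ℝ`
acting without fixed points is commutative. -/
theorem fixed_point_free_group_commutative
    (G : Subgroup (Equiv.Perm ℝ))
    (hmono : ∀ g ∈ G, StrictMono ⇑g) (hcont : ∀ g ∈ G, Continuous ⇑g)
    (hfree : ∀ g ∈ G, g ≠ 1 → ∀ x : ℝ, g x ≠ x) :
    ∀ a ∈ G, ∀ b ∈ G, a * b = b * a := by
  have hle : ∀ g ∈ G, ∀ h ∈ G, g 0 ≤ h 0 → ⇑g ≤ ⇑h := fun g hg h hh ↦
    G.coe_le_coe_of_apply_le_apply hcont hfree hg hh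
  let ev : G → ℝ := fun g ↦ (g : Equiv.Perm ℝ) 0
  have hinj : Function.Injective ev := fun g h he ↦ Subtype.ext <| Equiv.coe_fn_injective <|
    le_antisymm (hle _ g.2 _ h.2 he.le) (hle _ h.2 _ g.2 he.ge)
  let _ : LinearOrder G := LinearOrder.lift' ev hinj
  have : MulLeftMono G := ⟨fun k g h (hgh : ev g ≤ ev h) ↦ (hmono k k.2).monotone hgh⟩
  have : MulRightMono G := ⟨fun k g h (hgh : ev g ≤ ev h) ↦ hle g g.2 h h.2 hgh (ev k)⟩
  have harch : ∀ g : G, 1 < g → ∀ h : G, ∃ n : ℕ, h ≤ g ^ n := fun g hg h ↦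
    G.exists_le_pow_apply_of_lt_apply hcont hfree g.2 hg (ev h)
  intro a ha b hb
  exact congrArg Subtype.val (commute_of_archimedean harch ⟨a, ha⟩ ⟨b, hb⟩).eq
end

section
/- Let G be a group of orientation-preserving homeomorphisms of ℝ (under composition) acting without fixed points, i.e., no element of G other than the identity fixes any point of ℝ. Then for any a, b ∈ G exactly one of the following holds: a(x) < b(x) for all x ∈ ℝ; a = b; or b(x) < a(x) for all x ∈ ℝ. Consequently the relation a < b defined by pointwise comparison is a linear order on G that is invariant under both left and right multiplication. -/
/-- A continuous fixed-point-free map has constant sign of `g x - x`. -/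
lemma aux_sign (g : Equiv.Perm ℝ) (hc : Continuous ⇑g) (hf : ∀ x : ℝ, g x ≠ x) :
    (∀ x : ℝ, g x < x) ∨ (∀ x : ℝ, x < g x) := by
  by_contra h
  push_neg at h
  obtain ⟨⟨x, hx⟩, y, hy⟩ := h
  have hx' : x < g x := lt_of_le_of_ne hx (fun h => hf x h.symm)
  have hy' : g y < y := lt_of_le_of_ne hy (hf y)
  have hcont : Continuous fun t : ℝ => g t - t := hc.sub continuous_id
  have h0 : (0 : ℝ) ∈ Set.uIcc (g x - x) (g y - y) := by
    rw [Set.mem_uIcc]; right; constructor <;> linarith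
  obtain ⟨z, _, hz⟩ :=
    intermediate_value_uIcc (f := fun t : ℝ => g t - t) hcont.continuousOn h0
  exact hf z (sub_eq_zero.mp (by simpa using hz))

/-- For a group of orientation-preserving homeomorphisms of `ℝ` acting
without fixed points, any two elements `a`, `b` satisfy exactly one of: `a < b` pointwise,
`a = b`, or `b < a` pointwise; and the pointwise order is invariant under left and right
multiplication. -/
theorem fixed_point_free_group_pointwise_linear_biinvariant_order
    (G : Subgroup (Equiv.Perm ℝ))
    (hmono : ∀ g ∈ G, StrictMono ⇑g) (hcont : ∀ g ∈ G, Continuous ⇑g)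
    (hfree : ∀ g ∈ G, g ≠ 1 → ∀ x : ℝ, g x ≠ x) :
    (∀ a ∈ G, ∀ b ∈ G,
      ((∀ x : ℝ, a x < b x) ∨ a = b ∨ (∀ x : ℝ, b x < a x)) ∧
      ¬((∀ x : ℝ, a x < b x) ∧ a = b) ∧
      ¬((∀ x : ℝ, a x < b x) ∧ (∀ x : ℝ, b x < a x)) ∧
      ¬(a = b ∧ (∀ x : ℝ, b x < a x))) ∧
    (∀ a ∈ G, ∀ b ∈ G, ∀ g ∈ G, (∀ x : ℝ, a x < b x) →
      (∀ x : ℝ, (g * a) x < (g * b) x) ∧ (∀ x : ℝ, (a * g) x < (b * g) x)) := by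
  constructor
  · intro a ha b hb
    refine ⟨?_, ?_, ?_, ?_⟩
    · by_cases hab : a = b
      · exact Or.inr (Or.inl hab)
      · have hcmem : b⁻¹ * a ∈ G := G.mul_mem (G.inv_mem hb) ha
        have hcne : b⁻¹ * a ≠ 1 := by
          intro h; exact hab (by rwa [inv_mul_eq_one, eq_comm] at h)
        rcases aux_sign (b⁻¹ * a) (hcont _ hcmem) (hfree _ hcmem hcne) with h | h
        · left; intro x
          have := hmono b hb (h x)
          simpa using this
        · right; right; intro x
          have := hmono b hb (h x)
          simpa using this
    · rintro ⟨h1, rfl⟩; exact lt_irrefl _ (h1 0)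
    · rintro ⟨h1, h2⟩; exact lt_asymm (h1 0) (h2 0)
    · rintro ⟨rfl, h2⟩; exact lt_irrefl _ (h2 0)
  · intro a _ b _ g hg h
    exact ⟨fun x => hmono g hg (h x), fun x => h (g x)⟩
end

section
/- Let G be a group of homeomorphisms of ℝ and let h be a homeomorphism of ℝ that commutes with every element of G. Suppose every orbit of G is dense in ℝ (for every x ∈ ℝ, the set {g(x) : g ∈ G} is dense in ℝ). If h has a fixed point, then h is the identity. -/
/-- Let `G` be a group of homeomorphisms of `ℝ` and `h` a homeomorphism
of `ℝ` commuting with every element of `G`.  If every orbit of `G` is dense in `ℝ` and `h`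
has a fixed point, then `h` is the identity. -/
theorem centralizer_of_dense_orbit_group_with_fixed_point_eq_id
    (G : Subgroup (Equiv.Perm ℝ))
    (hG : ∀ g ∈ G, Continuous ⇑g ∧ Continuous ⇑g⁻¹)
    (h : Equiv.Perm ℝ) (hc : Continuous ⇑h) (hc' : Continuous ⇑h⁻¹)
    (hcomm : ∀ g ∈ G, h * g = g * h)
    (hdense : ∀ x : ℝ, Dense {y : ℝ | ∃ g ∈ G, g x = y})
    (hfix : ∃ x : ℝ, h x = x) :
    h = 1 := by
  obtain ⟨x0, hx0⟩ := hfix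
  have hclosed : IsClosed {y : ℝ | h y = y} := isClosed_eq hc continuous_id
  have hsub : {y : ℝ | ∃ g ∈ G, g x0 = y} ⊆ {y : ℝ | h y = y} := by
    rintro y ⟨g, hg, rfl⟩
    have := congrArg (fun f : Equiv.Perm ℝ => f x0) (hcomm g hg)
    simp only [Equiv.Perm.mul_apply] at this
    simpa [hx0] using this
  have : (Set.univ : Set ℝ) ⊆ {y : ℝ | h y = y} := by
    have hd := (hdense x0).mono hsub
    rw [← hclosed.closure_eq, hd.closure_eq]
  ext y
  exact this (Set.mem_univ y)
end

section
/- Let a and b be orientation-preserving homeomorphisms of ℝ satisfying a(x+1) = a(x)+1 and b(x+1) = b(x)+1 for all x, and let r denote the rotation number r(f) = lim_{n→∞} fⁿ(0)/n. Then the commutator satisfies |r(a ∘ b ∘ a⁻¹ ∘ b⁻¹)| ≤ 1. -/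
open Filter Topology

open CircleDeg1Lift in
/-- If `f x + 1 ≤ g x` for all `x`, then the translation numbers satisfy
`τ f + 1 ≤ τ g`. -/
theorem translationNumber_add_one_le_aux (f g : CircleDeg1Lift)
    (h : ∀ x, f x + 1 ≤ g x) :
    f.translationNumber + 1 ≤ g.translationNumber := by
  set T : CircleDeg1Lift := ↑(translate (Multiplicative.ofAdd (1 : ℝ))) with hT
  have hcomm : Commute T f := by
    ext x
    show (1 : ℝ) + f x = f (1 + x)
    rw [f.map_one_add]
  have hle : T * f ≤ g := fun x => by
    show (1 : ℝ) + f x ≤ g x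
    rw [add_comm]; exact h x
  have := CircleDeg1Lift.translationNumber_mono hle
  rwa [CircleDeg1Lift.translationNumber_mul_of_commute hcomm, hT,
    CircleDeg1Lift.translationNumber_translate, add_comm] at this

/-- For lifts `a`, `b` of orientation-preserving circle homeomorphisms,
the rotation number of the commutator `[a,b] = a ∘ b ∘ a⁻¹ ∘ b⁻¹` satisfies
`|r([a,b])| ≤ 1`. -/
theorem rotation_number_commutator_le_one
    (a b : Equiv.Perm ℝ)
    (ha : StrictMono ⇑a) (ha' : Continuous ⇑a)
    (hb : StrictMono ⇑b) (hb' : Continuous ⇑b)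
    (hpa : ∀ x : ℝ, a (x + 1) = a x + 1) (hpb : ∀ x : ℝ, b (x + 1) = b x + 1)
    (rc : ℝ)
    (hrc : Tendsto (fun n : ℕ => (⇑(a * b * a⁻¹ * b⁻¹))^[n] 0 / (n : ℝ)) atTop (𝓝 rc)) :
    |rc| ≤ 1 := by
  -- lifts as `CircleDeg1Lift`
  have hpa' : ∀ x : ℝ, a.symm (x + 1) = a.symm x + 1 := fun x => by
    apply ha.injective
    rw [hpa, a.apply_symm_apply, a.apply_symm_apply]
  have hpb' : ∀ x : ℝ, b.symm (x + 1) = b.symm x + 1 := fun x => by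
    apply hb.injective
    rw [hpb, b.apply_symm_apply, b.apply_symm_apply]
  have hamono : Monotone ⇑a := ha.monotone
  have hbmono : Monotone ⇑b := hb.monotone
  have hamono' : Monotone ⇑a.symm := fun x y hxy => by
    rw [← ha.le_iff_le, a.apply_symm_apply, a.apply_symm_apply]; exact hxy
  have hbmono' : Monotone ⇑b.symm := fun x y hxy => by
    rw [← hb.le_iff_le, b.apply_symm_apply, b.apply_symm_apply]; exact hxy
  set A : CircleDeg1Lift := ⟨⟨⇑a, hamono⟩, hpa⟩ with hA
  set B : CircleDeg1Lift := ⟨⟨⇑b, hbmono⟩, hpb⟩ with hB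
  set c : CircleDeg1Lift :=
    ⟨⟨⇑(a * b * a⁻¹ * b⁻¹),
      (hamono.comp hbmono).comp (hamono'.comp hbmono')⟩,
      fun x => by
        show a (b (a.symm (b.symm (x + 1)))) = a (b (a.symm (b.symm x))) + 1
        rw [hpb', hpa', hpb, hpa]⟩ with hc
  have hcfun : ⇑c = ⇑(a * b * a⁻¹ * b⁻¹) := rfl
  have hτc : c.translationNumber = rc :=
    c.translationNumber_eq_of_tendsto₀ (by rw [hcfun]; exact hrc)
  -- τ (A*B) = τ (B*A)
  have hconj : (B * A).translationNumber = (A * B).translationNumber := by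
    refine CircleDeg1Lift.translationNumber_eq_of_semiconjBy (f := A) ?_
    show A * (B * A) = A * B * A
    rw [mul_assoc]
  -- key evaluation: c (b (a z)) = a (b z)
  have hkey : ∀ z : ℝ, c (b (a z)) = a (b z) := fun z => by
    show a (b (a.symm (b.symm (b (a z))))) = a (b z)
    rw [b.symm_apply_apply, a.symm_apply_apply]
  rw [abs_le]
  constructor
  · by_contra h
    push_neg at h
    have h1 : c.translationNumber < ((-1 : ℤ) : ℝ) := by
      rw [hτc]; push_cast; linarith
    have h2 : ∀ z : ℝ, (A * B) z + 1 ≤ (B * A) z := fun z => by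
      have := c.map_lt_of_translationNumber_lt_int h1 (b (a z))
      rw [hkey] at this
      push_cast at this
      show a (b z) + 1 ≤ b (a z)
      linarith
    have := translationNumber_add_one_le_aux _ _ h2
    rw [hconj] at this
    linarith
  · by_contra h
    push_neg at h
    have h1 : ((1 : ℤ) : ℝ) < c.translationNumber := by
      rw [hτc]; push_cast; linarith
    have h2 : ∀ z : ℝ, (B * A) z + 1 ≤ (A * B) z := fun z => by
      have := c.lt_map_of_int_lt_translationNumber h1 (b (a z))
      rw [hkey] at this
      push_cast at this
      show b (a z) + 1 ≤ a (b z)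
      linarith
    have := translationNumber_add_one_le_aux _ _ h2
    rw [hconj] at this
    linarith
end

section
/- Milnor–Wood inequality for surfaces with boundary: let n ≥ 0 and b ≥ 1, and let a₁, b₁, …, aₙ, bₙ, c₁, …, c_b be orientation-preserving homeomorphisms of ℝ satisfying f(x+1) = f(x)+1 for all x, such that [a₁,b₁] ∘ ⋯ ∘ [aₙ,bₙ] ∘ c₁ ∘ ⋯ ∘ c_b is the identity. Then the sum of the rotation numbers of the boundary elements satisfies r(c₁) + ⋯ + r(c_b) ≤ max(0, 2n + b − 2) (the right-hand side is max(0, −χ) for the compact oriented surface of genus n with b boundary components). -/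
/-!
The translation number `τ` is a quasimorphism of defect one: `τ f + τ g - 1 ≤ τ (f * g)`.
At scale `q`, follow the `f * g`-orbit of `x` and compare it step by step with the `f`-orbit
of `x` and a `g`-orbit of `y`, losing only integer parts; averaging over the starting phase of
the `g`-orbit shows that some phase loses at most one per step. On the group of units `τ` is
also odd and conjugation invariant, so commutators have `τ ≥ -1`, and writing the first factor
of a relation `x₁ ⋯ x_m = 1` as the inverse of the product of the others gives
`∑ τ xᵢ ≤ max 0 (m - 2)`. For the `n` commutators and `b` boundary elements of the surface
relation this is the Milnor–Wood bound.
-/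

open Filter Topology Finset Function
open scoped commutatorElement
local notation "τ" => CircleDeg1Lift.translationNumber

namespace CircleDeg1Lift

lemma add_int_le_map_of_add_int_le (f : CircleDeg1Lift) {u v : ℝ} {m : ℤ} (h : u + m ≤ v) :
    f u + m ≤ f v := by
  rw [← f.map_add_int]
  exact f.mono h

lemma iterate_add_sum_floor_le_iterate_mul (f g : CircleDeg1Lift) (x y : ℝ) (t : ℕ) :
    f^[t] x + ((∑ i ∈ range t, (⌊f^[i] x - g^[i] y⌋ + ⌊g^[i + 1] y - f^[i] x⌋) : ℤ) : ℝ) ≤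
      (f * g)^[t] x := by
  induction t with
  | zero => simp
  | succ t ih =>
    rw [sum_range_succ, ← add_assoc]
    set S := ∑ i ∈ range t, (⌊f^[i] x - g^[i] y⌋ + ⌊g^[i + 1] y - f^[i] x⌋)
    have hf := Int.floor_le (f^[t] x - g^[t] y)
    have hg := Int.floor_le (g^[t + 1] y - f^[t] x)
    have hgz : g^[t + 1] y + ((S + ⌊f^[t] x - g^[t] y⌋ : ℤ) : ℝ) ≤ g ((f * g)^[t] x) := by
      rw [iterate_succ_apply' (⇑g)]
      refine g.add_int_le_map_of_add_int_le ?_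
      push_cast
      linarith
    rw [iterate_succ_apply' (⇑f), iterate_succ_apply' (⇑(f * g)), mul_apply]
    refine f.add_int_le_map_of_add_int_le ?_
    push_cast at hgz ⊢
    linarith

end CircleDeg1Lift

lemma sub_le_sum_floor_sub_add_floor_sub (Y : ℕ → ℝ) (a : ℝ) {q : ℕ} {l : ℤ}
    (h : Y 0 + l ≤ Y q) : l - q ≤ ∑ j ∈ range q, (⌊a - Y j⌋ + ⌊Y (j + 1) - a⌋) := by
  have hshift : ∑ j ∈ range q, ⌊Y (j + 1) - a⌋ + ⌊Y 0 - a⌋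
      = ∑ j ∈ range q, ⌊Y j - a⌋ + ⌊Y q - a⌋ := by
    rw [← sum_range_succ, sum_range_succ']
  have hwind : ⌊Y 0 - a⌋ + l ≤ ⌊Y q - a⌋ := by
    rw [← Int.floor_add_intCast]
    exact Int.floor_mono (by linarith)
  have hpair : -(q : ℤ) ≤ ∑ j ∈ range q, ⌊a - Y j⌋ + ∑ j ∈ range q, ⌊Y j - a⌋ := by
    rw [← sum_add_distrib]
    simpa using sum_le_sum (s := range q) fun j _ => show -1 ≤ ⌊a - Y j⌋ + ⌊Y j - a⌋ by
      rw [← neg_sub, Int.floor_neg]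
      linarith [Int.ceil_le_floor_add_one (Y j - a)]
  rw [sum_add_distrib]
  linarith

namespace CircleDeg1Lift

lemma le_mul_translationNumber_mul (f g : CircleDeg1Lift) {q : ℕ} (hq : 0 < q) {k l : ℤ}
    {x y : ℝ} (hx : x + k ≤ f^[q] x) (hy : y + l ≤ g^[q] y) :
    (k + l - q : ℝ) ≤ q * τ (f * g) := by
  -- `β` is the starting phase of the `g`-orbit: over all phases, each point of the `f`-orbit
  -- meets one full period of the `g`-orbit, which winds `l` times around.
  have hsum : ∑ β ∈ range q, (l - q : ℤ) ≤ ∑ β ∈ range q, ∑ i ∈ range q,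
      (⌊f^[i] x - g^[i] (g^[β] y)⌋ + ⌊g^[i + 1] (g^[β] y) - f^[i] x⌋) := by
    rw [sum_comm]
    refine sum_le_sum fun i _ => ?_
    simp only [iterate_succ_apply, ← iterate_succ_apply' g]
    exact sub_le_sum_floor_sub_add_floor_sub (fun j => g^[i] (g^[j] y)) _
      (by simpa only [iterate_zero_apply, coe_pow] using (g ^ i).add_int_le_map_of_add_int_le hy)
  obtain ⟨β, -, hβ⟩ := exists_le_of_sum_le (nonempty_range_iff.2 hq.ne') hsum
  have horbit : x + (k + l - q : ℤ) ≤ ((f * g) ^ q) x := by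
    have hchain := iterate_add_sum_floor_le_iterate_mul f g x (g^[β] y) q
    have hβ' := (Int.cast_le (R := ℝ)).2 hβ
    rw [Int.cast_sub, Int.cast_natCast] at hβ'
    rw [coe_pow]
    push_cast
    linarith
  simpa using (f * g) ^ q |>.le_translationNumber_of_add_int_le horbit

lemma add_ceil_translationNumber_sub_one_le (h : CircleDeg1Lift) (x : ℝ) :
    x + (⌈τ h⌉ - 1 : ℤ) ≤ h x := by
  have hceil := (Int.cast_le (R := ℝ)).2 (Int.ceil_le_ceil (h.translationNumber_le_ceil_sub x))
  rw [Int.ceil_intCast] at hceil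
  push_cast
  linarith [Int.ceil_lt_add_one (h x - x)]

theorem translationNumber_add_sub_one_le_mul (f g : CircleDeg1Lift) :
    τ f + τ g - 1 ≤ τ (f * g) := by
  have hscaled : ∀ q : ℕ, 0 < q → q * (τ f + τ g - 1) - 2 ≤ q * τ (f * g) := by
    intro q hq
    have hk := add_ceil_translationNumber_sub_one_le (f ^ q) 0
    have hl := add_ceil_translationNumber_sub_one_le (g ^ q) 0
    rw [translationNumber_pow, coe_pow] at hk hl
    have := le_mul_translationNumber_mul f g hq hk hl
    push_cast at this
    linarith [Int.le_ceil (q * τ f), Int.le_ceil (q * τ g)]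
  by_contra! h
  obtain ⟨q, hq⟩ := exists_nat_gt (2 / (τ f + τ g - 1 - τ (f * g)))
  have hδ : 0 < τ f + τ g - 1 - τ (f * g) := by linarith
  have hq0 : 0 < q := by exact_mod_cast (div_pos two_pos hδ).trans hq
  rw [div_lt_iff₀ hδ] at hq
  linarith [hscaled q hq0]

end CircleDeg1Lift

lemma max_sub_two_add_le_max_two_mul_add_sub_two (n : ℕ) {b : ℕ} (hb : 1 ≤ b) :
    max 0 ((n : ℝ) + b - 2) + n ≤ max 0 (2 * (n : ℝ) + b - 2) := by
  rw [← max_add_add_right, zero_add]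
  refine max_le ?_ (le_of_eq_of_le (by ring) (le_max_right _ _))
  rcases n.eq_zero_or_pos with rfl | hn
  · simp
  · have : (1 : ℝ) ≤ n := by exact_mod_cast hn
    have : (1 : ℝ) ≤ b := by exact_mod_cast hb
    exact le_max_of_le_right (by linarith)

section Quasimorphism

variable {G : Type*} [Group G] (φ : G → ℝ)

lemma add_sum_sub_length_le_apply_mul_prod (hmul : ∀ x y, φ x + φ y - 1 ≤ φ (x * y))
    (a : G) (L : List G) : φ a + (L.map φ).sum - L.length ≤ φ (a * L.prod) := by
  induction L generalizing a with
  | nil => simp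
  | cons x L ih =>
    have := ih (a * x)
    rw [mul_assoc] at this
    simp only [List.map_cons, List.sum_cons, List.length_cons, List.prod_cons, Nat.cast_succ]
    linarith [hmul a x]

lemma sum_map_le_max_of_prod_eq_one (hmul : ∀ x y, φ x + φ y - 1 ≤ φ (x * y))
    (hinv : ∀ x, φ x⁻¹ = -φ x) {L : List G} (hL : L.prod = 1) :
    (L.map φ).sum ≤ max 0 (L.length - 2 : ℝ) := by
  match L, hL with
  | [], _ => simp
  | [x], hx =>
    have h1 : φ 1 = 0 := by linarith [inv_one (G := G) ▸ hinv 1]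
    simp_all
  | x :: y :: L, hxyL =>
    have hx : x⁻¹ = y * L.prod := inv_eq_of_mul_eq_one_right (by simpa using hxyL)
    have := add_sum_sub_length_le_apply_mul_prod φ hmul y L
    rw [← hx, hinv] at this
    simp only [List.map_cons, List.sum_cons, List.length_cons, Nat.cast_add, Nat.cast_one]
    exact le_max_of_le_right (by linarith)

lemma neg_one_le_apply_commutatorElement (hmul : ∀ x y, φ x + φ y - 1 ≤ φ (x * y))
    (hinv : ∀ x, φ x⁻¹ = -φ x) (hconj : ∀ x y, φ (x * y * x⁻¹) = φ y) (x y : G) :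
    -1 ≤ φ ⁅x, y⁆ := by
  rw [commutatorElement_def]
  linarith [hmul (x * y * x⁻¹) y⁻¹, hinv y, hconj x y]

lemma sum_apply_le_of_prod_commutatorElement_mul_prod_eq_one
    (hmul : ∀ x y, φ x + φ y - 1 ≤ φ (x * y)) (hinv : ∀ x, φ x⁻¹ = -φ x)
    (hconj : ∀ x y, φ (x * y * x⁻¹) = φ y) {n b : ℕ} (hb : 1 ≤ b) (x y : Fin n → G)
    (z : Fin b → G) (hrel : (List.ofFn fun i => ⁅x i, y i⁆).prod * (List.ofFn z).prod = 1) :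
    ∑ j, φ (z j) ≤ max 0 (2 * (n : ℝ) + b - 2) := by
  rw [← List.prod_append] at hrel
  have hsum := sum_map_le_max_of_prod_eq_one φ hmul hinv hrel
  simp only [List.map_append, List.map_ofFn, List.sum_append, List.sum_ofFn, List.length_append,
    List.length_ofFn, comp_def, Nat.cast_add] at hsum
  have hcomm : -(n : ℝ) ≤ ∑ i, φ ⁅x i, y i⁆ := by
    simpa using sum_le_sum (s := univ) fun i _ =>
      neg_one_le_apply_commutatorElement φ hmul hinv hconj (x i) (y i)
  linarith [max_sub_two_add_le_max_two_mul_add_sub_two n hb]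

end Quasimorphism

namespace CircleDeg1Lift

def unitsToPerm : CircleDeg1Liftˣ →* Equiv.Perm ℝ where
  toFun u := (toOrderIso u).toEquiv
  map_one' := rfl
  map_mul' _ _ := rfl

@[simp]
lemma coe_unitsToPerm (u : CircleDeg1Liftˣ) : ⇑(unitsToPerm u) = u := rfl

lemma unitsToPerm_injective : Injective unitsToPerm := fun u v h =>
  Units.ext <| ext fun x => by simpa using DFunLike.congr_fun h x

lemma exists_unitsToPerm_eq (f : Equiv.Perm ℝ) (hf : Monotone f)
    (h1 : ∀ x, f (x + 1) = f x + 1) : ∃ u, unitsToPerm u = f := by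
  obtain ⟨u, hu⟩ := (isUnit_iff_bijective (f := ⟨⟨f, hf⟩, h1⟩)).2 f.bijective
  exact ⟨u, Equiv.ext fun x => by simp [hu]⟩

end CircleDeg1Lift

theorem milnor_wood_inequality_surface_with_boundary_general
    (n b : ℕ) (hb1 : 1 ≤ b)
    (a : Fin n → Equiv.Perm ℝ) (a' : Fin n → Equiv.Perm ℝ) (c : Fin b → Equiv.Perm ℝ)
    (hamono : ∀ i, StrictMono ⇑(a i))
    (ha'mono : ∀ i, StrictMono ⇑(a' i))
    (hcmono : ∀ j, StrictMono ⇑(c j))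
    (hpa : ∀ i, ∀ x : ℝ, a i (x + 1) = a i x + 1)
    (hpa' : ∀ i, ∀ x : ℝ, a' i (x + 1) = a' i x + 1)
    (hpc : ∀ j, ∀ x : ℝ, c j (x + 1) = c j x + 1)
    (hrel : (List.ofFn fun i => ⁅a i, a' i⁆).prod * (List.ofFn c).prod = 1)
    (rc : Fin b → ℝ)
    (hrc : ∀ j, Tendsto (fun k : ℕ => (⇑(c j))^[k] 0 / (k : ℝ)) atTop (𝓝 (rc j))) :
    ∑ j, rc j ≤ max 0 (2 * (n : ℝ) + (b : ℝ) - 2) := by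
  choose u hu using fun i =>
    CircleDeg1Lift.exists_unitsToPerm_eq (a i) (hamono i).monotone (hpa i)
  choose u' hu' using fun i =>
    CircleDeg1Lift.exists_unitsToPerm_eq (a' i) (ha'mono i).monotone (hpa' i)
  choose v hv using fun j =>
    CircleDeg1Lift.exists_unitsToPerm_eq (c j) (hcmono j).monotone (hpc j)
  have hrcτ : ∀ j, rc j = τ (v j) := fun j =>
    (CircleDeg1Lift.translationNumber_eq_of_tendsto₀ _ (by simpa [← hv] using hrc j)).symm
  have hrelU : (List.ofFn fun i => ⁅u i, u' i⁆).prod * (List.ofFn v).prod = 1 :=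
    CircleDeg1Lift.unitsToPerm_injective <| by
      simpa [map_list_prod, List.map_ofFn, comp_def, hu, hu', hv] using hrel
  simp only [hrcτ]
  exact sum_apply_le_of_prod_commutatorElement_mul_prod_eq_one (fun w : CircleDeg1Liftˣ => τ w)
    (fun u v => CircleDeg1Lift.translationNumber_add_sub_one_le_mul u v)
    CircleDeg1Lift.translationNumber_units_inv
    (fun u v => CircleDeg1Lift.translationNumber_conj_eq u v) hb1 u u' v hrelU

/-- **Milnor–Wood inequality for surfaces with boundary.**
If `a₁, b₁, …, aₙ, bₙ, c₁, …, c_b` are lifts of orientation-preserving circle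
homeomorphisms with `[a₁,b₁] ⋯ [aₙ,bₙ] c₁ ⋯ c_b = 1` (the surface group relation for the
compact oriented surface of genus `n` with `b ≥ 1` boundary components), then the sum of
the rotation numbers of the boundary elements is at most `max 0 (2n + b − 2) = max(0, −χ)`. -/
theorem milnor_wood_inequality_surface_with_boundary
    (n b : ℕ) (hb1 : 1 ≤ b)
    (a : Fin n → Equiv.Perm ℝ) (a' : Fin n → Equiv.Perm ℝ) (c : Fin b → Equiv.Perm ℝ)
    (hamono : ∀ i, StrictMono ⇑(a i)) (hacont : ∀ i, Continuous ⇑(a i))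
    (ha'mono : ∀ i, StrictMono ⇑(a' i)) (ha'cont : ∀ i, Continuous ⇑(a' i))
    (hcmono : ∀ j, StrictMono ⇑(c j)) (hccont : ∀ j, Continuous ⇑(c j))
    (hpa : ∀ i, ∀ x : ℝ, a i (x + 1) = a i x + 1)
    (hpa' : ∀ i, ∀ x : ℝ, a' i (x + 1) = a' i x + 1)
    (hpc : ∀ j, ∀ x : ℝ, c j (x + 1) = c j x + 1)
    (hrel : (List.ofFn fun i => ⁅a i, a' i⁆).prod * (List.ofFn c).prod = 1)
    (rc : Fin b → ℝ)
    (hrc : ∀ j, Tendsto (fun k : ℕ => (⇑(c j))^[k] 0 / (k : ℝ)) atTop (𝓝 (rc j))) :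
    ∑ j, rc j ≤ max 0 (2 * (n : ℝ) + (b : ℝ) - 2) :=
  milnor_wood_inequality_surface_with_boundary_general n b hb1 a a' c hamono ha'mono hcmono hpa hpa'
    hpc hrel rc hrc
end

section
/- Let a and b be orientation-preserving homeomorphisms of ℝ satisfying f(x+1) = f(x)+1 for all x, and let r denote the rotation number r(f) = lim_{n→∞} fⁿ(0)/n. If at least one of r(a), r(b) is not an integer, then r(a ∘ b ∘ a⁻¹ ∘ b⁻¹) ≤ 1/2. -/
open Filter Topology Function CircleDeg1Lift

local notation "τ" => CircleDeg1Lift.translationNumber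

noncomputable section

namespace RotHalfAux

/-- Build a unit of `CircleDeg1Lift` from a strictly monotone periodic permutation of `ℝ`. -/
def permLift (a : Equiv.Perm ℝ) (ha : StrictMono ⇑a)
    (hpa : ∀ x : ℝ, a (x + 1) = a x + 1) : CircleDeg1Liftˣ where
  val := ⟨⟨⇑a, ha.monotone⟩, hpa⟩
  inv := ⟨⟨⇑a.symm, fun x y hxy => by
      by_contra h
      push_neg at h
      have := ha h
      simp only [Equiv.apply_symm_apply] at this
      exact absurd hxy (not_le.2 this)⟩,
    fun x => a.injective (by rw [hpa, Equiv.apply_symm_apply, Equiv.apply_symm_apply])⟩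
  val_inv := CircleDeg1Lift.ext fun x => a.apply_symm_apply x
  inv_val := CircleDeg1Lift.ext fun x => a.symm_apply_apply x

@[simp] lemma permLift_coe (a : Equiv.Perm ℝ) (ha hpa) :
    ⇑((permLift a ha hpa : CircleDeg1Liftˣ) : CircleDeg1Lift) = ⇑a := rfl

@[simp] lemma permLift_inv_coe (a : Equiv.Perm ℝ) (ha hpa) :
    ⇑(((permLift a ha hpa)⁻¹ : CircleDeg1Liftˣ) : CircleDeg1Lift) = ⇑a.symm := rfl

lemma le_iff (f g : CircleDeg1Lift) : f ≤ g ↔ ∀ x, f x ≤ g x := Iff.rfl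

/-- Core lemma: if `τ G` is not an integer, then `τ (F * G * F⁻¹ * G⁻¹) ≤ 1/2`. -/
theorem core (F G : CircleDeg1Liftˣ)
    (hG : ∀ m : ℤ, τ (G : CircleDeg1Lift) ≠ (m : ℝ)) :
    τ ((↑(F * G * F⁻¹ * G⁻¹) : CircleDeg1Lift)) ≤ 1 / 2 := by
  set n : ℤ := ⌊τ (G : CircleDeg1Lift)⌋ with hn
  set t : CircleDeg1Liftˣ := translate (Multiplicative.ofAdd (n : ℝ)) with ht
  have htc : ∀ h : CircleDeg1Lift, Commute ((t : CircleDeg1Liftˣ) : CircleDeg1Lift) h := by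
    intro h
    rw [commute_iff_commute]
    intro x
    show ((t : CircleDeg1Liftˣ) : CircleDeg1Lift) (h x)
        = h (((t : CircleDeg1Liftˣ) : CircleDeg1Lift) x)
    show (n : ℝ) + h x = h ((n : ℝ) + x)
    rw [h.map_int_add]
  have htu : ∀ u : CircleDeg1Liftˣ, Commute t u := fun u => by
    have h' := (htc (u : CircleDeg1Lift)).eq
    exact Units.ext (by simpa only [Units.val_mul] using h')
  set g : CircleDeg1Liftˣ := t⁻¹ * G with hg
  have hGg : G = t * g := by rw [hg, mul_inv_cancel_left]
  have hτg : τ (g : CircleDeg1Lift) = τ (G : CircleDeg1Lift) - n := by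
    have hval : ((g : CircleDeg1Liftˣ) : CircleDeg1Lift)
        = ((t⁻¹ : CircleDeg1Liftˣ) : CircleDeg1Lift) * (G : CircleDeg1Lift) := by
      rw [hg]; rfl
    have hcu : Commute (t⁻¹) G := (htu G).inv_left
    have hcomm : Commute ((t⁻¹ : CircleDeg1Liftˣ) : CircleDeg1Lift) (G : CircleDeg1Lift) := by
      have h' := congrArg Units.val hcu.eq
      simp only [Units.val_mul] at h'
      exact h'
    rw [hval, translationNumber_mul_of_commute hcomm, translationNumber_units_inv,
      ht, translationNumber_translate]
    ring
  have h0 : 0 < τ (g : CircleDeg1Lift) := by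
    have h1 : (n : ℝ) ≤ τ (G : CircleDeg1Lift) := Int.floor_le _
    have h2 : (n : ℝ) ≠ τ (G : CircleDeg1Lift) := fun h => hG n h.symm
    rw [hτg]; have := lt_of_le_of_ne h1 h2; linarith
  have h1 : τ (g : CircleDeg1Lift) < 1 := by
    have := Int.lt_floor_add_one (τ (G : CircleDeg1Lift))
    rw [hτg]; push_cast; linarith
  have hcommutator : F * G * F⁻¹ * G⁻¹ = F * g * F⁻¹ * g⁻¹ := by
    rw [hGg]
    have e1 : F * t = t * F := ((htu F).symm).eq
    calc F * (t * g) * F⁻¹ * (t * g)⁻¹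
        = (F * t) * (g * F⁻¹ * g⁻¹) * t⁻¹ := by group
      _ = (t * F) * (g * F⁻¹ * g⁻¹) * t⁻¹ := by rw [e1]
      _ = t * (F * g * F⁻¹ * g⁻¹) * t⁻¹ := by group
      _ = (F * g * F⁻¹ * g⁻¹) * t * t⁻¹ := by rw [(htu (F * g * F⁻¹ * g⁻¹)).eq]
      _ = F * g * F⁻¹ * g⁻¹ := by group
  rw [hcommutator]
  by_contra hc
  push_neg at hc
  set k : CircleDeg1Liftˣ := F⁻¹ * g * F with hk
  have hτk : τ (k : CircleDeg1Lift) = τ (g : CircleDeg1Lift) := by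
    have hval : ((k : CircleDeg1Liftˣ) : CircleDeg1Lift)
        = ((F⁻¹ : CircleDeg1Liftˣ) : CircleDeg1Lift) * (g : CircleDeg1Lift)
            * (F : CircleDeg1Lift) := by rw [hk]; rfl
    rw [hval]
    exact translationNumber_conj_eq' F (g : CircleDeg1Lift)
  set d : CircleDeg1Liftˣ := g * k⁻¹ with hd
  have hdeq : d = F⁻¹ * (F * g * F⁻¹ * g⁻¹) * F := by rw [hd, hk]; group
  have hτd : τ (d : CircleDeg1Lift) = τ ((↑(F * g * F⁻¹ * g⁻¹) : CircleDeg1Lift)) := by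
    have hval : ((d : CircleDeg1Liftˣ) : CircleDeg1Lift)
        = ((F⁻¹ : CircleDeg1Liftˣ) : CircleDeg1Lift)
            * ((F * g * F⁻¹ * g⁻¹ : CircleDeg1Liftˣ) : CircleDeg1Lift)
            * (F : CircleDeg1Lift) := by rw [hdeq]; rfl
    rw [hval]
    exact translationNumber_conj_eq' F _
  have hτd2 : ((1 : ℤ) : ℝ) < τ (((d : CircleDeg1Liftˣ) : CircleDeg1Lift) ^ 2) := by
    rw [translationNumber_pow]
    push_cast
    rw [hτd]
    linarith
  have hpt : ∀ x : ℝ, x + ((1 : ℤ) : ℝ) < ((((d : CircleDeg1Liftˣ) : CircleDeg1Lift)) ^ 2) x :=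
    fun x => (((d : CircleDeg1Liftˣ) : CircleDeg1Lift) ^ 2).lt_map_of_int_lt_translationNumber hτd2 x
  have hglt : ∀ z : ℝ, (g : CircleDeg1Lift) z < z + ((1 : ℤ) : ℝ) := fun z =>
    (g : CircleDeg1Lift).map_lt_of_translationNumber_lt_int (by exact_mod_cast h1) z
  have hdval : ((d : CircleDeg1Liftˣ) : CircleDeg1Lift)
      = (g : CircleDeg1Lift) * ((k⁻¹ : CircleDeg1Liftˣ) : CircleDeg1Lift) := by
    rw [hd]; rfl
  have hstep : ∀ z : ℝ, ((d : CircleDeg1Liftˣ) : CircleDeg1Lift) z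
      = (g : CircleDeg1Lift) (((k⁻¹ : CircleDeg1Liftˣ) : CircleDeg1Lift) z) := fun z => by
    rw [hdval]; rfl
  -- key pointwise inequality : k ∘ k ≤ g
  have key : ((k : CircleDeg1Lift) * (k : CircleDeg1Lift)) ≤ (g : CircleDeg1Lift) := by
    rw [le_iff]
    intro y
    have A := hpt ((k : CircleDeg1Lift) y)
    have e2 : ((((d : CircleDeg1Liftˣ) : CircleDeg1Lift)) ^ 2) ((k : CircleDeg1Lift) y)
        = (g : CircleDeg1Lift) (((k⁻¹ : CircleDeg1Liftˣ) : CircleDeg1Lift)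
            ((g : CircleDeg1Lift) y)) := by
      rw [sq, mul_apply, hstep, hstep]
      congr 1
      congr 1
      congr 1
      exact units_inv_apply_apply k y
    rw [e2] at A
    have B := hglt (((k⁻¹ : CircleDeg1Liftˣ) : CircleDeg1Lift) ((g : CircleDeg1Lift) y))
    have C : (k : CircleDeg1Lift) y
        < ((k⁻¹ : CircleDeg1Liftˣ) : CircleDeg1Lift) ((g : CircleDeg1Lift) y) := by
      push_cast at A B
      linarith
    have D := (k : CircleDeg1Lift).mono C.le
    have E : (k : CircleDeg1Lift)
        (((k⁻¹ : CircleDeg1Liftˣ) : CircleDeg1Lift) ((g : CircleDeg1Lift) y))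
        = (g : CircleDeg1Lift) y := units_apply_inv_apply k _
    calc ((k : CircleDeg1Lift) * (k : CircleDeg1Lift)) y
        = (k : CircleDeg1Lift) ((k : CircleDeg1Lift) y) := mul_apply _ _ _
      _ ≤ (k : CircleDeg1Lift)
          (((k⁻¹ : CircleDeg1Liftˣ) : CircleDeg1Lift) ((g : CircleDeg1Lift) y)) := D
      _ = (g : CircleDeg1Lift) y := E
  have mono := translationNumber_mono key
  rw [translationNumber_mul_of_commute (Commute.refl _), hτk] at mono
  linarith

end RotHalfAux

end

open RotHalfAux in
/-- For lifts `a`, `b` of orientation-preserving circle homeomorphisms,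
if at least one of the rotation numbers `r(a)`, `r(b)` is not an integer, then the rotation
number of the commutator satisfies `r([a,b]) ≤ 1/2`. -/
theorem rotation_number_commutator_le_half_of_not_integer
    (a b : Equiv.Perm ℝ)
    (ha : StrictMono ⇑a) (ha' : Continuous ⇑a)
    (hb : StrictMono ⇑b) (hb' : Continuous ⇑b)
    (hpa : ∀ x : ℝ, a (x + 1) = a x + 1) (hpb : ∀ x : ℝ, b (x + 1) = b x + 1)
    (ra rb rc : ℝ)
    (hra : Tendsto (fun n : ℕ => (⇑a)^[n] 0 / (n : ℝ)) atTop (𝓝 ra))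
    (hrb : Tendsto (fun n : ℕ => (⇑b)^[n] 0 / (n : ℝ)) atTop (𝓝 rb))
    (hrc : Tendsto (fun n : ℕ => (⇑(a * b * a⁻¹ * b⁻¹))^[n] 0 / (n : ℝ)) atTop (𝓝 rc))
    (hnotint : (¬∃ m : ℤ, ra = (m : ℝ)) ∨ (¬∃ m : ℤ, rb = (m : ℝ))) :
    rc ≤ 1 / 2 := by
  set A : CircleDeg1Liftˣ := permLift a ha hpa with hA
  set B : CircleDeg1Liftˣ := permLift b hb hpb with hB
  have hτA : τ (A : CircleDeg1Lift) = ra :=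
    (A : CircleDeg1Lift).translationNumber_eq_of_tendsto₀ hra
  have hτB : τ (B : CircleDeg1Lift) = rb :=
    (B : CircleDeg1Lift).translationNumber_eq_of_tendsto₀ hrb
  have hCcoe : ⇑((↑(A * B * A⁻¹ * B⁻¹) : CircleDeg1Lift))
      = ⇑(a * b * a⁻¹ * b⁻¹ : Equiv.Perm ℝ) := by
    funext x
    show (A : CircleDeg1Lift)
        ((B : CircleDeg1Lift)
          (((A⁻¹ : CircleDeg1Liftˣ) : CircleDeg1Lift)
            (((B⁻¹ : CircleDeg1Liftˣ) : CircleDeg1Lift) x)))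
      = (a * b * a⁻¹ * b⁻¹ : Equiv.Perm ℝ) x
    simp [hA, hB, Equiv.Perm.mul_apply, Equiv.Perm.inv_def]
  have hτC : τ ((↑(A * B * A⁻¹ * B⁻¹) : CircleDeg1Lift)) = rc := by
    apply CircleDeg1Lift.translationNumber_eq_of_tendsto₀
    rw [hCcoe]
    exact hrc
  rw [← hτC]
  rcases hnotint with hia | hib
  · -- conjugate by A⁻¹ to move the non-integrality to the second factor
    have hgrp : A⁻¹ * (A * B * A⁻¹ * B⁻¹) * A = B * A⁻¹ * B⁻¹ * (A⁻¹)⁻¹ := by group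
    have hval : ((↑(B * A⁻¹ * B⁻¹ * (A⁻¹)⁻¹) : CircleDeg1Lift))
        = ((A⁻¹ : CircleDeg1Liftˣ) : CircleDeg1Lift)
            * ((↑(A * B * A⁻¹ * B⁻¹)) : CircleDeg1Lift) * (A : CircleDeg1Lift) := by
      rw [← hgrp]; rfl
    have hτeq : τ ((↑(B * A⁻¹ * B⁻¹ * (A⁻¹)⁻¹) : CircleDeg1Lift))
        = τ ((↑(A * B * A⁻¹ * B⁻¹) : CircleDeg1Lift)) := by
      rw [hval]
      exact translationNumber_conj_eq' A _
    rw [← hτeq]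
    apply core
    intro m hm
    rw [translationNumber_units_inv, hτA] at hm
    exact hia ⟨-m, by push_cast; linarith⟩
  · apply core
    intro m hm
    rw [hτB] at hm
    exact hib ⟨m, hm⟩
end

section
/- Let Γ be a group of orientation-preserving homeomorphisms of ℝ satisfying f(x+1) = f(x)+1 for all x, acting diagonally, properly discontinuously and cocompactly on the triple space T̃ = {(u,s,p) ∈ ℝ³ : u < s < p < u+1} (there is a compact K ⊆ T̃ with ⋃_{γ∈Γ} γ·K = T̃). Then Γ contains no parabolic elements: every γ ∈ Γ with γ ≠ id that has a fixed point in ℝ has fixed points x₀ and y with x₀ < y < x₀ + 1, and the fixed-point set of γ projects to exactly two points of ℝ/ℤ. -/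
/-- The open triple space `T̃ = {(u,s,p) ∈ ℝ³ : u < s < p < u + 1}`. -/
def TripleSpace : Set (ℝ × ℝ × ℝ) :=
  {q | q.1 < q.2.1 ∧ q.2.1 < q.2.2 ∧ q.2.2 < q.1 + 1}

/-- The diagonal action of a homeomorphism of `ℝ` on triples. -/
def tripleAct (γ : Equiv.Perm ℝ) (q : ℝ × ℝ × ℝ) : ℝ × ℝ × ℝ :=
  (γ q.1, γ q.2.1, γ q.2.2)

/-!
If `γ` fixed `x₀` but no point of `(x₀, x₀ + 1)`, it would push that interval to one side, say
to the right. Cocompactness pulls the shrinking triples `(x₀ - ε, x₀, x₀ + ε)` back into a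
compact set by elements `g n ∈ Γ`, which therefore converge (along an ultrafilter) to a map
jumping at `x₀` from `s` to some `v ∈ (s, s + 1)`. The conjugates `W n = g n γ (g n)⁻¹` are
parabolic at points tending to `s`; in the limit `W n` sends `(v, s + 1)` to `s + 1` and `(s, v)`
to `v`, while `(W n)⁻¹` sends `(v, s + 1)` to `v`. So for `s < y₀ < v < z₀ < s + 1` the triples
`(y₀, (W n)⁻¹ z₀, z₀)` and their images `(W n y₀, z₀, W n z₀)` both converge in `T̃`, which
proper discontinuity forbids for elements that are not eventually constant.

A nontrivial `γ` cannot fix three points of a triple of `T̃`: all its powers would fix that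
triple, so `γ` would have finite order, and an increasing map of finite order is the identity.
Hence the fixed points of `γ` are exactly two points mod 1.
-/

open Filter Topology Set

def ProperlyDiscontinuousOnTriples (Γ : Subgroup (Equiv.Perm ℝ)) : Prop :=
  ∀ K : Set (ℝ × ℝ × ℝ), K ⊆ TripleSpace → IsCompact K →
    {γ : Equiv.Perm ℝ | γ ∈ Γ ∧ (tripleAct γ '' K ∩ K).Nonempty}.Finite

def CocompactOnTriples (Γ : Subgroup (Equiv.Perm ℝ)) : Prop :=
  ∃ K : Set (ℝ × ℝ × ℝ), K ⊆ TripleSpace ∧ IsCompact K ∧ (⋃ γ ∈ Γ, tripleAct γ '' K) = TripleSpace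

structure IsLift (f : ℝ → ℝ) : Prop where
  strictMono : StrictMono f
  map_add_one : ∀ x, f (x + 1) = f x + 1

/-- For a lift: a parabolic element with fixed points exactly `x₀ + ℤ`, moving all other points
to the right. The other orientation is reached by passing to `γ⁻¹`. -/
def IsParabolicAt (γ : Equiv.Perm ℝ) (x₀ : ℝ) : Prop :=
  γ x₀ = x₀ ∧ ∀ y ∈ Ioo x₀ (x₀ + 1), y < γ y

theorem isOpen_tripleSpace : IsOpen TripleSpace :=
  (isOpen_lt (by fun_prop) (by fun_prop)).and
    ((isOpen_lt (by fun_prop) (by fun_prop)).and (isOpen_lt (by fun_prop) (by fun_prop)))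

theorem IsCompact.exists_tendsto {ι X : Type*} [TopologicalSpace X] {K : Set X}
    (hK : IsCompact K) {𝒰 : Ultrafilter ι} {f : ι → X} (hf : ∀ᶠ i in 𝒰, f i ∈ K) :
    ∃ x ∈ K, Tendsto f 𝒰 (𝓝 x) :=
  hK.ultrafilter_le_nhds' (𝒰.map f) hf

theorem forall_lt_or_forall_gt_of_forall_ne_s17 {f : ℝ → ℝ} {s : Set ℝ} (hs : IsPreconnected s)
    (hf : ContinuousOn f s) (h : ∀ y ∈ s, f y ≠ y) :
    (∀ y ∈ s, y < f y) ∨ ∀ y ∈ s, f y < y := by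
  by_contra! H
  obtain ⟨⟨a, ha, ha'⟩, b, hb, hb'⟩ := H
  obtain ⟨x, hx, hfx⟩ := hs.intermediate_value₂ ha hb hf continuousOn_id ha' hb'
  exact h x hx hfx

theorem Monotone.apply_le_of_forall_mem_Ioo {f : ℝ → ℝ} (hf : Monotone f)
    (hsurj : Function.Surjective f) {a b t : ℝ} (hab : a < b) (h : ∀ y ∈ Ioo a b, f y ≤ t) :
    f b ≤ t :=
  _root_.le_of_tendsto
    (((hf.continuous_of_surjective hsurj).tendsto b).mono_left nhdsWithin_le_nhds)
    (eventually_of_mem (Ioo_mem_nhdsLT hab) h)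

namespace StrictMono

variable {α : Type*} [LinearOrder α] {γ : Equiv.Perm α}

theorem lt_inv_apply_iff (hγ : StrictMono γ) {x y : α} : x < γ⁻¹ y ↔ γ x < y := by
  simpa using (hγ.lt_iff_lt (a := x) (b := γ⁻¹ y)).symm

theorem inv_apply_lt_iff (hγ : StrictMono γ) {x y : α} : γ⁻¹ y < x ↔ y < γ x := by
  simpa using (hγ.lt_iff_lt (a := γ⁻¹ y) (b := x)).symm

theorem eq_one_of_isOfFinOrder (hγ : StrictMono γ) (h : IsOfFinOrder γ) : γ = 1 := by
  obtain ⟨n, hn, hpow⟩ := isOfFinOrder_iff_pow_eq_one.1 h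
  ext x
  have hx : (⇑γ)^[n] x = id^[n] x := by simp [← Equiv.Perm.coe_pow, hpow]
  exact (Function.Commute.id_right.iterate_pos_eq_iff_map_eq hγ.monotone strictMono_id hn).1 hx

end StrictMono

namespace IsLift

variable {f : ℝ → ℝ} {γ : Equiv.Perm ℝ}

theorem map_add_int (hf : IsLift f) (x : ℝ) (n : ℤ) : f (x + n) = f x + n :=
  AddConstMapClass.map_add_int (⟨f, hf.map_add_one⟩ : AddConstMap ℝ ℝ 1 1) x n

theorem map_sub_one (hf : IsLift f) (x : ℝ) : f (x - 1) = f x - 1 := by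
  simpa [sub_eq_add_neg] using hf.map_add_int x (-1)

theorem apply_mem_Icc (hf : IsLift f) (x y : ℝ) :
    f x ∈ Icc (f y + ⌊x - y⌋) (f y + ⌊x - y⌋ + 1) := by
  rw [← hf.map_add_int, ← hf.map_add_one]
  exact ⟨hf.strictMono.monotone (by linarith [Int.floor_le (x - y)]),
    hf.strictMono.monotone (by linarith [Int.lt_floor_add_one (x - y)])⟩

theorem abs_apply_sub_le (hf : IsLift f) {c : ℝ} (hc : f c = c) (x : ℝ) : |f x - x| ≤ 1 := by
  have h := hf.apply_mem_Icc x c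
  rw [hc] at h
  rw [abs_le]
  constructor <;> linarith [h.1, h.2, Int.floor_le (x - c), Int.lt_floor_add_one (x - c)]

theorem inv_apply_mem_Ioo_iff (hγ : IsLift γ) {x y : ℝ} :
    γ⁻¹ y ∈ Ioo x (x + 1) ↔ y ∈ Ioo (γ x) (γ x + 1) := by
  rw [mem_Ioo, mem_Ioo, hγ.strictMono.lt_inv_apply_iff, hγ.strictMono.inv_apply_lt_iff,
    hγ.map_add_one]

theorem inv (hγ : IsLift γ) : IsLift ⇑(γ⁻¹) where
  strictMono x y hxy := hγ.strictMono.lt_inv_apply_iff.2 (by simpa using hxy)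
  map_add_one x := by
    rw [Equiv.Perm.inv_eq_iff_eq, hγ.map_add_one]
    simp

end IsLift

theorem tripleAct_pow_eq_self {γ : Equiv.Perm ℝ} {q : ℝ × ℝ × ℝ} (hq : tripleAct γ q = q)
    (n : ℕ) : tripleAct (γ ^ n) q = q := by
  induction n with
  | zero => rfl
  | succ n ih => rw [pow_succ]; exact (congrArg (tripleAct (γ ^ n)) hq).trans ih

theorem exists_tripleAct_mem_of_cover {Γ : Subgroup (Equiv.Perm ℝ)} {K : Set (ℝ × ℝ × ℝ)}
    (hcover : (⋃ γ ∈ Γ, tripleAct γ '' K) = TripleSpace) {q : ℝ × ℝ × ℝ}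
    (hq : q ∈ TripleSpace) : ∃ g ∈ Γ, tripleAct g q ∈ K := by
  rw [← hcover] at hq
  simp only [mem_iUnion, mem_image] at hq
  obtain ⟨γ, hγ, k, hk, rfl⟩ := hq
  refine ⟨γ⁻¹, inv_mem hγ, ?_⟩
  simpa [tripleAct] using hk

namespace ProperlyDiscontinuousOnTriples

variable {Γ : Subgroup (Equiv.Perm ℝ)}

theorem eq_one_of_tripleAct_eq_self (hproper : ProperlyDiscontinuousOnTriples Γ)
    {γ : Equiv.Perm ℝ} (hγ : γ ∈ Γ) (hmono : StrictMono γ) {q : ℝ × ℝ × ℝ} (hq : q ∈ TripleSpace)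
    (hfix : tripleAct γ q = q) : γ = 1 := by
  refine hmono.eq_one_of_isOfFinOrder (finite_powers.1 ((hproper {q}
    (singleton_subset_iff.2 hq) isCompact_singleton).subset ?_))
  rintro _ ⟨n, rfl⟩
  exact ⟨pow_mem hγ n, q, ⟨q, rfl, tripleAct_pow_eq_self hfix n⟩, rfl⟩

theorem eventually_eq_of_tendsto (hproper : ProperlyDiscontinuousOnTriples Γ) {ι : Type*}
    {𝒰 : Ultrafilter ι} {δ : ι → Equiv.Perm ℝ} (hδ : ∀ i, δ i ∈ Γ) {T : ι → ℝ × ℝ × ℝ}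
    {S P : ℝ × ℝ × ℝ} (hS : S ∈ TripleSpace) (hP : P ∈ TripleSpace) (hT : Tendsto T 𝒰 (𝓝 S))
    (hδT : Tendsto (fun i => tripleAct (δ i) (T i)) 𝒰 (𝓝 P)) :
    ∃ w, ∀ᶠ i in 𝒰, δ i = w := by
  obtain ⟨BS, hBS, hBST, hBSc⟩ := local_compact_nhds (isOpen_tripleSpace.mem_nhds hS)
  obtain ⟨BP, hBP, hBPT, hBPc⟩ := local_compact_nhds (isOpen_tripleSpace.mem_nhds hP)
  have hfin := hproper (BS ∪ BP) (union_subset hBST hBPT) (hBSc.union hBPc)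
  have hev : ∀ᶠ i in 𝒰, ∃ w ∈ {γ | γ ∈ Γ ∧ (tripleAct γ '' (BS ∪ BP) ∩ (BS ∪ BP)).Nonempty},
      δ i = w := by
    filter_upwards [hT hBS, hδT hBP] with i hi hi'
    exact ⟨δ i, ⟨hδ i, _, mem_image_of_mem _ (Or.inl hi), Or.inr hi'⟩, rfl⟩
  obtain ⟨w, -, hw⟩ := (Ultrafilter.eventually_exists_mem_iff hfin).1 hev
  exact ⟨w, hw⟩

end ProperlyDiscontinuousOnTriples

theorem mk_mem_tripleSpace {u s p : ℝ} : (u, s, p) ∈ TripleSpace ↔ u < s ∧ s < p ∧ p < u + 1 :=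
  Iff.rfl

section UltrafilterLimits

variable {ι : Type*} {𝒰 : Ultrafilter ι} {f : ι → ℝ → ℝ}

theorem exists_tendsto_apply_of_isLift (hf : ∀ i, IsLift (f i)) {y c d : ℝ}
    (hy : ∀ᶠ i in 𝒰, f i y ∈ Icc c d) (x : ℝ) : ∃ l, Tendsto (fun i => f i x) 𝒰 (𝓝 l) := by
  have hx : ∀ᶠ i in 𝒰, f i x ∈ Icc (c + ⌊x - y⌋) (d + ⌊x - y⌋ + 1) := hy.mono fun i hi => by
    have h := (hf i).apply_mem_Icc x y
    exact ⟨by linarith [h.1, hi.1], by linarith [h.2, hi.2]⟩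
  obtain ⟨l, -, hl⟩ := isCompact_Icc.exists_tendsto hx
  exact ⟨l, hl⟩

theorem monotone_of_tendsto_apply (hf : ∀ i, Monotone (f i)) {L : ℝ → ℝ}
    (hL : ∀ x, Tendsto (fun i => f i x) 𝒰 (𝓝 (L x))) : Monotone L :=
  fun x y hxy => le_of_tendsto_of_tendsto' (hL x) (hL y) fun i => hf i hxy

theorem map_sub_one_of_tendsto_apply (hf : ∀ i, IsLift (f i)) {L : ℝ → ℝ}
    (hL : ∀ x, Tendsto (fun i => f i x) 𝒰 (𝓝 (L x))) (x : ℝ) : L (x - 1) = L x - 1 :=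
  tendsto_nhds_unique (hL (x - 1)) (by simpa only [(hf _).map_sub_one] using (hL x).sub_const 1)

end UltrafilterLimits

theorem exists_tendsto_apply_jump {Γ : Subgroup (Equiv.Perm ℝ)} (hΓ : ∀ γ ∈ Γ, IsLift γ)
    (hcocompact : CocompactOnTriples Γ) (x₀ : ℝ) :
    ∃ (𝒰 : Ultrafilter ℕ) (g : ℕ → Equiv.Perm ℝ) (L : ℝ → ℝ) (u p : ℝ), (∀ n, g n ∈ Γ) ∧
      (∀ x, Tendsto (fun n => g n x) 𝒰 (𝓝 (L x))) ∧ (u, L x₀, p) ∈ TripleSpace ∧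
      (∀ x < x₀, L x ≤ u) ∧ ∀ x > x₀, p ≤ L x := by
  obtain ⟨K, hKT, hK, hcover⟩ := hcocompact
  let ε : ℕ → ℝ := fun n => 1 / ((n : ℝ) + 1) / 3
  have hε_pos : ∀ n, 0 < ε n := fun n => by positivity
  have hε_lt : ∀ n, ε n < 1 / 2 := fun n => by
    have : 1 / ((n : ℝ) + 1) ≤ 1 := by rw [div_le_one (by positivity)]; simp
    show 1 / ((n : ℝ) + 1) / 3 < 1 / 2
    linarith
  have hq : ∀ n, (x₀ - ε n, x₀, x₀ + ε n) ∈ TripleSpace := fun n =>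
    mk_mem_tripleSpace.2 ⟨by linarith [hε_pos n], by linarith [hε_pos n], by linarith [hε_lt n]⟩
  choose g hg hgK using fun n => exists_tripleAct_mem_of_cover hcover (hq n)
  let 𝒰 := Ultrafilter.of (atTop : Filter ℕ)
  have hε_tendsto : Tendsto ε 𝒰 (𝓝 0) := by
    rw [← zero_div (3 : ℝ)]
    exact ((tendsto_one_div_add_atTop_nhds_zero_nat (𝕜 := ℝ)).div_const 3).mono_left
      (Ultrafilter.of_le atTop)
  obtain ⟨⟨u, s, p⟩, hκK, hκ⟩ := hK.exists_tendsto (𝒰 := 𝒰) (Eventually.of_forall hgK)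
  have hs : Tendsto (fun n => g n x₀) 𝒰 (𝓝 s) := hκ.snd_nhds.fst_nhds
  choose L hL using exists_tendsto_apply_of_isLift (f := fun n => g n) (fun n => hΓ _ (hg n))
    (hs.eventually (Icc_mem_nhds (sub_one_lt s) (lt_add_one s)))
  have hLx₀ : L x₀ = s := tendsto_nhds_unique (hL x₀) hs
  refine ⟨𝒰, g, L, u, p, hg, hL, hLx₀ ▸ hKT hκK, fun x hx => ?_, fun x hx => ?_⟩
  · refine le_of_tendsto_of_tendsto (hL x) hκ.fst_nhds ?_
    filter_upwards [hε_tendsto.eventually (gt_mem_nhds (sub_pos.2 hx))] with n hn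
    exact (hΓ _ (hg n)).strictMono.monotone (by linarith)
  · refine le_of_tendsto_of_tendsto hκ.snd_nhds.snd_nhds (hL x) ?_
    filter_upwards [hε_tendsto.eventually (gt_mem_nhds (sub_pos.2 hx))] with n hn
    exact (hΓ _ (hg n)).strictMono.monotone (by linarith)

namespace IsParabolicAt

variable {γ : Equiv.Perm ℝ} {x₀ : ℝ}

theorem apply_mem_Ioo (hγ : IsLift γ) (hpar : IsParabolicAt γ x₀) {y : ℝ}
    (hy : y ∈ Ioo x₀ (x₀ + 1)) : γ y ∈ Ioo y (x₀ + 1) :=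
  ⟨hpar.2 y hy, by simpa [hγ.map_add_one, hpar.1] using hγ.strictMono hy.2⟩

theorem inv_apply_mem_Ioo (hγ : IsLift γ) (hpar : IsParabolicAt γ x₀) {y : ℝ}
    (hy : y ∈ Ioo x₀ (x₀ + 1)) : γ⁻¹ y ∈ Ioo x₀ y := by
  have h := hγ.inv_apply_mem_Ioo_iff.2 (hpar.1.symm ▸ hy)
  exact ⟨h.1, by simpa using hpar.2 _ h⟩

theorem conj (hpar : IsParabolicAt γ x₀) {h : Equiv.Perm ℝ} (hh : IsLift h) :
    IsParabolicAt (h * γ * h⁻¹) (h x₀) := by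
  refine ⟨by simp [hpar.1], fun y hy => ?_⟩
  simpa using hh.strictMono (hpar.2 _ (hh.inv_apply_mem_Ioo_iff.2 hy))

theorem inv_of_forall_apply_lt (hγ : IsLift γ) (hfix : γ x₀ = x₀)
    (h : ∀ y ∈ Ioo x₀ (x₀ + 1), γ y < y) : IsParabolicAt γ⁻¹ x₀ :=
  ⟨by rw [Equiv.Perm.inv_eq_iff_eq, hfix], fun y hy => by
    simpa using h _ (hγ.inv_apply_mem_Ioo_iff.2 (hfix.symm ▸ hy))⟩

end IsParabolicAt

section ParabolicSequences

variable {ι : Type*} {𝒰 : Ultrafilter ι} {W : ι → Equiv.Perm ℝ} {c : ι → ℝ} {s v : ℝ}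

theorem eventually_mem_Ioo_of_isParabolicAt (hW : ∀ i, IsLift (W i))
    (hpar : ∀ i, IsParabolicAt (W i) (c i)) (hc : Tendsto c 𝒰 (𝓝 s)) {y : ℝ}
    (hy : y ∈ Ioo s (s + 1)) :
    ∀ᶠ i in 𝒰, W i y ∈ Ioo y (c i + 1) ∧ (W i)⁻¹ y ∈ Ioo (c i) y := by
  filter_upwards [hc.eventually (Ioo_mem_nhds (by linarith [hy.2] : y - 1 < s) hy.1)] with i hi
  have hyi : y ∈ Ioo (c i) (c i + 1) := ⟨hi.2, by linarith [hi.1]⟩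
  exact ⟨(hpar i).apply_mem_Ioo (hW i) hyi, (hpar i).inv_apply_mem_Ioo (hW i) hyi⟩

theorem not_eventually_eq_of_isParabolicAt (hW : ∀ i, IsLift (W i))
    (hpar : ∀ i, IsParabolicAt (W i) (c i)) (hsv : s < v) (hvs : v < s + 1)
    (hc : Tendsto c 𝒰 (𝓝 s)) {r : ι → ℝ} (hr : Tendsto r 𝒰 (𝓝 v))
    (hleft : ∀ y < v, ∀ᶠ i in 𝒰, W i y ≤ r i) : ¬∃ w, ∀ᶠ i in 𝒰, W i = w := by
  rintro ⟨w, hw⟩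
  obtain ⟨i, hi, hv⟩ :=
    (hw.and (eventually_mem_Ioo_of_isParabolicAt hW hpar hc ⟨hsv, hvs⟩)).exists
  subst hi
  have hwv : W i v ≤ v := (hW i).strictMono.monotone.apply_le_of_forall_mem_Ioo
    (W i).surjective hsv fun y hy => ge_of_tendsto hr <| by
      filter_upwards [hw, hleft y hy.2] with j hj hj'
      rwa [hj] at hj'
  exact hwv.not_gt hv.1.1

end ParabolicSequences

theorem false_of_tendsto_isParabolicAt {Γ : Subgroup (Equiv.Perm ℝ)} (hΓ : ∀ γ ∈ Γ, IsLift γ)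
    (hproper : ProperlyDiscontinuousOnTriples Γ) {ι : Type*} {𝒰 : Ultrafilter ι}
    {W : ι → Equiv.Perm ℝ} (hWΓ : ∀ i, W i ∈ Γ) {c : ι → ℝ}
    (hpar : ∀ i, IsParabolicAt (W i) (c i)) {s v : ℝ} (hsv : s < v) (hvs : v < s + 1)
    (hc : Tendsto c 𝒰 (𝓝 s)) {r r' : ι → ℝ} (hr : Tendsto r 𝒰 (𝓝 v))
    (hr' : Tendsto r' 𝒰 (𝓝 v)) (hleft : ∀ y < v, ∀ᶠ i in 𝒰, W i y ≤ r i)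
    (hright : ∀ z > v, ∀ᶠ i in 𝒰, r' i ≤ (W i)⁻¹ z) : False := by
  have hW : ∀ i, IsLift (W i) := fun i => hΓ _ (hWΓ i)
  have hnconst := not_eventually_eq_of_isParabolicAt hW hpar hsv hvs hc hr hleft
  have hbdd : ∀ {f : Equiv.Perm ℝ} {x : ℝ}, IsLift f → f x = x → f 0 ∈ Icc (-1) 1 :=
    fun hf hx => by simpa using abs_le.1 (hf.abs_apply_sub_le hx 0)
  choose Wl hWl using exists_tendsto_apply_of_isLift (𝒰 := 𝒰) (f := fun i => W i) hW
    (Eventually.of_forall fun i => hbdd (hW i) (hpar i).1)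
  choose Vl hVl using exists_tendsto_apply_of_isLift (𝒰 := 𝒰) (f := fun i => ⇑(W i)⁻¹)
    (fun i => (hW i).inv)
    (Eventually.of_forall fun i =>
      hbdd (x := c i) (hW i).inv (Equiv.Perm.inv_eq_iff_eq.2 (hpar i).1.symm))
  have hWl_mem : ∀ y ∈ Ioo s (s + 1), Wl y ∈ Icc y (s + 1) := fun y hy =>
    have h := eventually_mem_Ioo_of_isParabolicAt hW hpar hc hy
    ⟨ge_of_tendsto (hWl y) (h.mono fun _ hi => hi.1.1.le),
      le_of_tendsto_of_tendsto (hWl y) (hc.add_const 1) (h.mono fun _ hi => hi.1.2.le)⟩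
  have hVl_mem : ∀ y ∈ Ioo s (s + 1), Vl y ∈ Icc s y := fun y hy =>
    have h := eventually_mem_Ioo_of_isParabolicAt hW hpar hc hy
    ⟨le_of_tendsto_of_tendsto hc (hVl y) (h.mono fun _ hi => hi.2.1.le),
      le_of_tendsto (hVl y) (h.mono fun _ hi => hi.2.2.le)⟩
  have hWl_le : ∀ y < v, Wl y ≤ v := fun y hy => le_of_tendsto_of_tendsto (hWl y) hr (hleft y hy)
  have hVl_ge : ∀ z > v, v ≤ Vl z := fun z hz => le_of_tendsto_of_tendsto hr' (hVl z) (hright z hz)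
  obtain ⟨y₀, hsy₀, hy₀v⟩ := exists_between hsv
  obtain ⟨z₀, hvz₀, hz₀s⟩ := exists_between hvs
  obtain ⟨z₁, hz₀z₁, hz₁s⟩ := exists_between hz₀s
  obtain ⟨z₂, hvz₂, hz₂z₀⟩ := exists_between hvz₀
  have hy₀ : y₀ ∈ Ioo s (s + 1) := ⟨hsy₀, by linarith⟩
  have hz₀ : z₀ ∈ Ioo s (s + 1) := ⟨by linarith, hz₀s⟩
  have hz₁ : z₁ ∈ Ioo s (s + 1) := ⟨by linarith, hz₁s⟩
  have hz₂ : z₂ ∈ Ioo s (s + 1) := ⟨by linarith, by linarith⟩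
  obtain ⟨hWy₀, -⟩ := hWl_mem y₀ hy₀
  obtain ⟨hWz₀, hWz₀s⟩ := hWl_mem z₀ hz₀
  obtain ⟨hWz₁, hWz₁s⟩ := hWl_mem z₁ hz₁
  obtain ⟨hVy₀s, hVy₀⟩ := hVl_mem y₀ hy₀
  obtain ⟨-, hVz₀⟩ := hVl_mem z₀ hz₀
  obtain ⟨-, hVz₂⟩ := hVl_mem z₂ hz₂
  have hWy₀v := hWl_le y₀ hy₀v
  have hVz₀v := hVl_ge z₀ hvz₀
  have hVz₂v := hVl_ge z₂ hvz₂
  have hWz₀z₁ : z₁ ≤ Wl z₀ := by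
    by_contra! h
    exact hnconst <| hproper.eventually_eq_of_tendsto hWΓ (T := fun _ => (y₀, z₀, z₁))
      (P := (Wl y₀, Wl z₀, Wl z₁))
      (mk_mem_tripleSpace.2 ⟨by linarith, by linarith, by linarith⟩)
      (mk_mem_tripleSpace.2 ⟨by linarith, by linarith, by linarith⟩) tendsto_const_nhds
      ((hWl y₀).prodMk_nhds ((hWl z₀).prodMk_nhds (hWl z₁)))
  have hVz₀z₂ : Vl z₀ ≤ z₂ := by
    by_contra! h
    obtain ⟨w, hw⟩ := hproper.eventually_eq_of_tendsto (fun i => inv_mem (hWΓ i))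
      (T := fun _ => (y₀, z₂, z₀)) (P := (Vl y₀, Vl z₂, Vl z₀))
      (mk_mem_tripleSpace.2 ⟨by linarith, by linarith, by linarith⟩)
      (mk_mem_tripleSpace.2 ⟨by linarith, by linarith, by linarith⟩) tendsto_const_nhds
      ((hVl y₀).prodMk_nhds ((hVl z₂).prodMk_nhds (hVl z₀)))
    exact hnconst ⟨w⁻¹, hw.mono fun i hi => by rw [← hi, inv_inv]⟩
  refine hnconst <| hproper.eventually_eq_of_tendsto hWΓ (T := fun i => (y₀, (W i)⁻¹ z₀, z₀))
    (S := (y₀, Vl z₀, z₀)) (P := (Wl y₀, z₀, Wl z₀))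
    (mk_mem_tripleSpace.2 ⟨by linarith, by linarith, by linarith⟩)
    (mk_mem_tripleSpace.2 ⟨by linarith, by linarith, by linarith⟩)
    (tendsto_const_nhds.prodMk_nhds ((hVl z₀).prodMk_nhds tendsto_const_nhds)) ?_
  simpa [tripleAct] using (hWl y₀).prodMk_nhds (tendsto_const_nhds.prodMk_nhds (hWl z₀))

theorem false_of_tendsto_conj {Γ : Subgroup (Equiv.Perm ℝ)} (hΓ : ∀ γ ∈ Γ, IsLift γ)
    (hproper : ProperlyDiscontinuousOnTriples Γ) {γ : Equiv.Perm ℝ} (hγ : γ ∈ Γ) {x₀ : ℝ}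
    (hpar : IsParabolicAt γ x₀) {ι : Type*} {𝒰 : Ultrafilter ι} {h : ι → Equiv.Perm ℝ}
    (hh : ∀ i, h i ∈ Γ) {s v a : ℝ} (hsv : s < v) (hvs : v < s + 1)
    (hx₀ : Tendsto (fun i => h i x₀) 𝒰 (𝓝 s)) (ha : Tendsto (fun i => h i a) 𝒰 (𝓝 v))
    (hγa : Tendsto (fun i => h i (γ a)) 𝒰 (𝓝 v)) : False := by
  have hγl := hΓ γ hγ
  have hhl : ∀ i, IsLift (h i) := fun i => hΓ _ (hh i)
  refine false_of_tendsto_isParabolicAt hΓ hproper (W := fun i => h i * γ * (h i)⁻¹)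
    (fun i => mul_mem (mul_mem (hh i) hγ) (inv_mem (hh i))) (fun i => hpar.conj (hhl i))
    hsv hvs hx₀ hγa ha (fun y hy => ?_) (fun z hz => ?_)
  · filter_upwards [ha.eventually (lt_mem_nhds hy)] with i hi
    have : (h i)⁻¹ y < a := (hhl i).strictMono.inv_apply_lt_iff.2 hi
    simpa using (hhl i).strictMono.monotone (hγl.strictMono.monotone this.le)
  · filter_upwards [hγa.eventually (gt_mem_nhds hz)] with i hi
    have : a < γ⁻¹ ((h i)⁻¹ z) := hγl.strictMono.lt_inv_apply_iff.2
      ((hhl i).strictMono.lt_inv_apply_iff.2 hi)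
    simpa [mul_inv_rev, mul_assoc] using (hhl i).strictMono.monotone this.le

theorem false_of_isParabolicAt {Γ : Subgroup (Equiv.Perm ℝ)} (hΓ : ∀ γ ∈ Γ, IsLift γ)
    (hproper : ProperlyDiscontinuousOnTriples Γ) (hcocompact : CocompactOnTriples Γ)
    {γ : Equiv.Perm ℝ} (hγ : γ ∈ Γ) {x₀ : ℝ} (hpar : IsParabolicAt γ x₀) : False := by
  obtain ⟨𝒰, g, L, u, p, hg, hL, ⟨hus, hsp, hpu⟩, hL_lt, hL_gt⟩ :=
    exists_tendsto_apply_jump hΓ hcocompact x₀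
  have hgl : ∀ n, IsLift (g n) := fun n => hΓ _ (hg n)
  -- a constant sequence would have the continuous limit `g n`, but `L` jumps at `x₀`
  have hnconst : ¬∃ w, ∀ᶠ n in 𝒰, g n = w := by
    rintro ⟨w, hw⟩
    obtain ⟨n, rfl⟩ := hw.exists
    have hLg : ∀ x, L x = g n x := fun x => tendsto_nhds_unique (hL x)
      (tendsto_const_nhds.congr' (hw.mono fun m hm => by simp only [hm]))
    have := (hgl n).strictMono.monotone.apply_le_of_forall_mem_Ioo (g n).surjective
      (sub_one_lt x₀) fun y hy => hLg y ▸ hL_lt y hy.2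
    linarith [hLg x₀]
  obtain ⟨a, ha⟩ := nonempty_Ioo.2 (lt_add_one x₀)
  have hγa := hpar.apply_mem_Ioo (hΓ γ hγ) ha
  have hLa := map_sub_one_of_tendsto_apply hgl hL a
  have hLγa := map_sub_one_of_tendsto_apply hgl hL (γ a)
  have hLa_le := hL_lt (a - 1) (by linarith [ha.2])
  have hLγa_le := hL_lt (γ a - 1) (by linarith [hγa.2])
  have hLa_ge := hL_gt a ha.1
  have hLγa_eq : L (γ a) = L a := by
    refine le_antisymm (not_lt.1 fun hlt => hnconst ?_)
      (monotone_of_tendsto_apply (fun n => (hgl n).strictMono.monotone) hL hγa.1.le)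
    exact hproper.eventually_eq_of_tendsto hg (T := fun _ => (x₀, a, γ a))
      (P := (L x₀, L a, L (γ a))) (mk_mem_tripleSpace.2 ⟨ha.1, hγa.1, hγa.2⟩)
      (mk_mem_tripleSpace.2 ⟨by linarith, hlt, by linarith⟩) tendsto_const_nhds
      ((hL x₀).prodMk_nhds ((hL a).prodMk_nhds (hL (γ a))))
  exact false_of_tendsto_conj hΓ hproper hγ hpar hg (by linarith) (by linarith) (hL x₀) (hL a)
    (hLγa_eq ▸ hL (γ a))

theorem exists_fixedPt_mem_Ioo {Γ : Subgroup (Equiv.Perm ℝ)} (hΓ : ∀ γ ∈ Γ, IsLift γ)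
    (hproper : ProperlyDiscontinuousOnTriples Γ)
    (hcocompact : CocompactOnTriples Γ)
    {γ : Equiv.Perm ℝ} (hγ : γ ∈ Γ) {x₀ : ℝ} (hx₀ : γ x₀ = x₀) :
    ∃ y ∈ Ioo x₀ (x₀ + 1), γ y = y := by
  by_contra! hno
  have hγl := hΓ γ hγ
  rcases forall_lt_or_forall_gt_of_forall_ne_s17 isPreconnected_Ioo
    (hγl.strictMono.monotone.continuous_of_surjective γ.surjective).continuousOn hno with
    hright | hleft
  · exact false_of_isParabolicAt hΓ hproper hcocompact hγ ⟨hx₀, hright⟩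
  · exact false_of_isParabolicAt hΓ hproper hcocompact (inv_mem hγ)
      (IsParabolicAt.inv_of_forall_apply_lt hγl hx₀ hleft)

theorem image_fixedPoints_eq_pair {Γ : Subgroup (Equiv.Perm ℝ)} (hΓ : ∀ γ ∈ Γ, IsLift γ)
    (hproper : ProperlyDiscontinuousOnTriples Γ) {γ : Equiv.Perm ℝ} (hγ : γ ∈ Γ) (hne : γ ≠ 1)
    {x₀ y : ℝ} (hx₀ : γ x₀ = x₀) (hy : y ∈ Ioo x₀ (x₀ + 1)) (hyfix : γ y = y) :
    (fun x : ℝ => (x : AddCircle (1 : ℝ))) '' {x | γ x = x} =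
      {(x₀ : AddCircle (1 : ℝ)), (y : AddCircle (1 : ℝ))} := by
  have hγl := hΓ γ hγ
  refine Subset.antisymm ?_ (by rintro _ (rfl | rfl) <;> exact mem_image_of_mem _ ‹_›)
  rintro _ ⟨z, hz : γ z = z, rfl⟩
  dsimp only
  set k := ⌊z - x₀⌋
  have hz' : z - k ∈ Ico x₀ (x₀ + 1) :=
    ⟨by linarith [Int.floor_le (z - x₀)], by linarith [Int.lt_floor_add_one (z - x₀)]⟩
  have hz'fix : γ (z - k) = z - k := by
    rw [sub_eq_add_neg, ← Int.cast_neg, hγl.map_add_int, hz]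
  have hcoe : ((z - k : ℝ) : AddCircle (1 : ℝ)) = z := by simp
  rw [← hcoe]
  have hx₀' : x₀ ∈ Ico x₀ (x₀ + 1) := ⟨le_rfl, lt_add_one x₀⟩
  have hy' : y ∈ Ico x₀ (x₀ + 1) := Ioo_subset_Ico_self hy
  simp only [mem_insert_iff, mem_singleton_iff, AddCircle.coe_eq_coe_iff_of_mem_Ico hz' hx₀',
    AddCircle.coe_eq_coe_iff_of_mem_Ico hz' hy']
  by_contra! hnot
  have hlt : x₀ < z - k := lt_of_le_of_ne hz'.1 (Ne.symm hnot.1)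
  refine hne ?_
  rcases lt_or_gt_of_ne hnot.2 with h | h
  · exact hproper.eq_one_of_tripleAct_eq_self hγ hγl.strictMono (q := (x₀, z - k, y))
      (mk_mem_tripleSpace.2 ⟨hlt, h, hy.2⟩) (by simp [tripleAct, hx₀, hz'fix, hyfix])
  · exact hproper.eq_one_of_tripleAct_eq_self hγ hγl.strictMono (q := (x₀, y, z - k))
      (mk_mem_tripleSpace.2 ⟨hy.1, h, hz'.2⟩) (by simp [tripleAct, hx₀, hz'fix, hyfix])

theorem cocompact_extended_convergence_group_no_parabolics_general
    (Γ : Subgroup (Equiv.Perm ℝ))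
    (hmono : ∀ γ ∈ Γ, StrictMono ⇑γ)
    (hper : ∀ γ ∈ Γ, ∀ x : ℝ, γ (x + 1) = γ x + 1)
    (hproper : ∀ K : Set (ℝ × ℝ × ℝ), K ⊆ TripleSpace → IsCompact K →
      {γ : Equiv.Perm ℝ | γ ∈ Γ ∧ (tripleAct γ '' K ∩ K).Nonempty}.Finite)
    (hcocompact : ∃ K : Set (ℝ × ℝ × ℝ), K ⊆ TripleSpace ∧ IsCompact K ∧
      (⋃ γ ∈ Γ, tripleAct γ '' K) = TripleSpace) :
    ∀ γ ∈ Γ, γ ≠ 1 → (∃ x : ℝ, γ x = x) →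
      (∃ x₀ y : ℝ, x₀ < y ∧ y < x₀ + 1 ∧ γ x₀ = x₀ ∧ γ y = y) ∧
      Set.encard ((fun x : ℝ => (x : AddCircle (1 : ℝ))) '' {x : ℝ | γ x = x}) = 2 := by
  have hΓ : ∀ γ ∈ Γ, IsLift γ := fun γ hγ => ⟨hmono γ hγ, hper γ hγ⟩
  rintro γ hγ hne ⟨x₀, hx₀⟩
  obtain ⟨y, hy, hyfix⟩ := exists_fixedPt_mem_Ioo hΓ hproper hcocompact hγ hx₀
  refine ⟨⟨x₀, y, hy.1, hy.2, hx₀, hyfix⟩, ?_⟩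
  rw [image_fixedPoints_eq_pair hΓ hproper hγ hne hx₀ hy hyfix, encard_pair]
  rw [Ne, AddCircle.coe_eq_coe_iff_of_mem_Ico ⟨le_rfl, lt_add_one x₀⟩ (Ioo_subset_Ico_self hy)]
  exact hy.1.ne

/-- A cocompact extended convergence group contains no parabolic
elements: if `Γ` acts properly discontinuously and cocompactly on the triple space `T̃`,
then every nonidentity `γ ∈ Γ` with a fixed point has fixed points `x₀ < y < x₀ + 1`,
and its fixed-point set projects to exactly two points of `ℝ/ℤ`. -/
theorem cocompact_extended_convergence_group_no_parabolics
    (Γ : Subgroup (Equiv.Perm ℝ))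
    (hmono : ∀ γ ∈ Γ, StrictMono ⇑γ) (hcont : ∀ γ ∈ Γ, Continuous ⇑γ)
    (hper : ∀ γ ∈ Γ, ∀ x : ℝ, γ (x + 1) = γ x + 1)
    (hproper : ∀ K : Set (ℝ × ℝ × ℝ), K ⊆ TripleSpace → IsCompact K →
      {γ : Equiv.Perm ℝ | γ ∈ Γ ∧ (tripleAct γ '' K ∩ K).Nonempty}.Finite)
    (hcocompact : ∃ K : Set (ℝ × ℝ × ℝ), K ⊆ TripleSpace ∧ IsCompact K ∧
      (⋃ γ ∈ Γ, tripleAct γ '' K) = TripleSpace) :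
    ∀ γ ∈ Γ, γ ≠ 1 → (∃ x : ℝ, γ x = x) →
      (∃ x₀ y : ℝ, x₀ < y ∧ y < x₀ + 1 ∧ γ x₀ = x₀ ∧ γ y = y) ∧
      Set.encard ((fun x : ℝ => (x : AddCircle (1 : ℝ))) '' {x : ℝ | γ x = x}) = 2 :=
  cocompact_extended_convergence_group_no_parabolics_general Γ hmono hper hproper hcocompact
end
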